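/- arXiv:math/9907128 — 10 statements merged into one kernel-verified Lean document; each statement's English description precedes it below -/
import Mathlib

section
/- Every completely metrizable abelian topological group that is topologically generated by the union of countably many topological subgroups, each topologically isomorphic to the circle group, is monothetic (i.e., contains an element whose cyclic subgroup is dense). -/
lemma aux_countable_closure {G : Type} [AddCommGroup G] {s : Set G} (hs : s.Countable) :
    (AddSubgroup.closure s : Set G).Countable := by
  classical
  set t : Set G := s ∪ (fun x => -x) '' s with ht
  have htc : t.Countable := hs.union (hs.image _)
  haveI := htc.to_subtype
  have hRc : (Set.range (fun l : List t => (l.map Subtype.val).sum)).Countable :=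
    Set.countable_range _
  refine hRc.mono ?_
  have hneg : ∀ x ∈ t, -x ∈ t := by
    rintro x (hx | ⟨y, hy, rfl⟩)
    · exact Or.inr ⟨x, hx, rfl⟩
    · simp only [neg_neg]; exact Or.inl hy
  let H : AddSubgroup G :=
    { carrier := Set.range (fun l : List t => (l.map Subtype.val).sum)
      zero_mem' := ⟨[], rfl⟩
      add_mem' := by
        rintro a b ⟨l₁, rfl⟩ ⟨l₂, rfl⟩
        exact ⟨l₁ ++ l₂, by simp⟩
      neg_mem' := by
        rintro a ⟨l, rfl⟩
        refine ⟨l.map (fun x => ⟨-x.1, hneg _ x.2⟩), ?_⟩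
        show ((l.map _).map _).sum = -(l.map Subtype.val).sum
        induction l with
        | nil => simp
        | cons x l ih => simpa [neg_add, add_comm] using ih }
  have : AddSubgroup.closure s ≤ H := by
    rw [AddSubgroup.closure_le]
    intro x hx
    exact ⟨[⟨x, Or.inl hx⟩], by simp⟩
  exact this

lemma aux_decomp {G : Type} [AddCommGroup G] (T : ℕ → AddSubgroup G) {x : G}
    (hx : x ∈ ⨆ i, T i) :
    ∃ (F : Finset ℕ) (f : ℕ → G), (∀ i, f i ∈ T i) ∧ x = ∑ i ∈ F, f i := by
  classical
  let H : AddSubgroup G :=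
    { carrier := {x | ∃ (F : Finset ℕ) (f : ℕ → G), (∀ i, f i ∈ T i) ∧ x = ∑ i ∈ F, f i}
      zero_mem' := ⟨∅, fun _ => 0, fun i => zero_mem _, by simp⟩
      add_mem' := by
        rintro a b ⟨F₁, f₁, h₁, rfl⟩ ⟨F₂, f₂, h₂, rfl⟩
        refine ⟨F₁ ∪ F₂,
          fun i => (if i ∈ F₁ then f₁ i else 0) + (if i ∈ F₂ then f₂ i else 0), ?_, ?_⟩
        · intro i
          refine add_mem ?_ ?_ <;> split <;> simp [h₁ i, h₂ i, zero_mem]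
        · rw [Finset.sum_add_distrib, Finset.sum_ite_mem, Finset.sum_ite_mem,
            Finset.union_inter_cancel_left, Finset.union_inter_cancel_right]
      neg_mem' := by
        rintro a ⟨F, f, h, rfl⟩
        exact ⟨F, fun i => -f i, fun i => neg_mem (h i), by simp⟩ }
  have : (⨆ i, T i) ≤ H := by
    refine iSup_le fun j y hy => ?_
    refine ⟨{j}, fun i => if i = j then y else 0, ?_, by simp⟩
    intro i
    by_cases h : i = j
    · subst h; simpa using hy
    · simp only [if_neg h]; exact zero_mem _
  exact this hx

lemma aux_circle (a b : AddCircle (1:ℝ)) (n : ℕ) :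
    ∃ c : AddCircle (1:ℝ), ((n:ℤ)+1) • c = b ∧ dist c a ≤ 2/(n+1) := by
  obtain ⟨α, rfl⟩ := QuotientAddGroup.mk_surjective a
  obtain ⟨β₀, rfl⟩ := QuotientAddGroup.mk_surjective b
  have hm0 : (0:ℝ) < (n:ℝ)+1 := by positivity
  have hm0' : ((n:ℝ)+1) ≠ 0 := ne_of_gt hm0
  set β : ℝ := Int.fract β₀ with hβ
  set γ : ℝ := (⌊((n:ℝ)+1)*α⌋:ℝ)/((n:ℝ)+1) + β/((n:ℝ)+1) with hγ
  have key : ((n:ℤ)+1) • γ = (⌊((n:ℝ)+1)*α⌋:ℝ) + β := by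
    rw [zsmul_eq_mul, hγ]
    push_cast
    field_simp
  have hcast : ∀ k : ℤ, ((k:ℝ) : AddCircle (1:ℝ)) = 0 := by
    intro k
    rw [AddCircle.coe_eq_zero_iff]
    exact ⟨k, by simp⟩
  refine ⟨(γ : AddCircle (1:ℝ)), ?_, ?_⟩
  · rw [← AddCircle.coe_zsmul, key]
    have hβeq : (⌊((n:ℝ)+1)*α⌋:ℝ) + β = β₀ + ((⌊((n:ℝ)+1)*α⌋ - ⌊β₀⌋ : ℤ) : ℝ) := by
      push_cast [hβ, Int.fract]
      ring
    rw [hβeq, AddCircle.coe_add, hcast, add_zero]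
  · have hsub : (γ : AddCircle (1:ℝ)) - (α : AddCircle (1:ℝ))
        = ((γ - α : ℝ) : AddCircle (1:ℝ)) := by
      rw [AddCircle.coe_sub]
    rw [dist_eq_norm, hsub]
    refine le_trans QuotientAddGroup.norm_mk_le_norm ?_
    rw [Real.norm_eq_abs]
    have h1 : γ - α = ((⌊((n:ℝ)+1)*α⌋:ℝ) - ((n:ℝ)+1)*α + β)/((n:ℝ)+1) := by
      rw [hγ]
      field_simp
      ring
    rw [h1, abs_div, abs_of_pos hm0]
    have h2 : |(⌊((n:ℝ)+1)*α⌋:ℝ) - ((n:ℝ)+1)*α + β| ≤ 2 := by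
      have f1 := Int.fract_nonneg (((n:ℝ)+1)*α)
      have f2 := Int.fract_lt_one (((n:ℝ)+1)*α)
      have f3 := Int.fract_nonneg β₀
      have f4 := Int.fract_lt_one β₀
      have hf : (⌊((n:ℝ)+1)*α⌋:ℝ) - ((n:ℝ)+1)*α = -Int.fract (((n:ℝ)+1)*α) := by
        rw [Int.fract]; ring
      rw [hf, hβ, abs_le]
      constructor <;> linarith
    gcongr

lemma aux_sum_nhds {G : Type} [AddCommGroup G] [TopologicalSpace G] [IsTopologicalAddGroup G]
    (F : Finset ℕ) {W : Set G} (hW : W ∈ nhds (0:G)) :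
    ∃ V : Set G, IsOpen V ∧ (0:G) ∈ V ∧
      ∀ f : ℕ → G, (∀ i ∈ F, f i ∈ V) → ∑ i ∈ F, f i ∈ W := by
  classical
  induction F using Finset.induction_on generalizing W with
  | empty =>
    obtain ⟨V, hVW, hVo, hV0⟩ := mem_nhds_iff.mp hW
    exact ⟨V, hVo, hV0, fun f _ => by simpa using hVW hV0⟩
  | @insert a F ha ih =>
    obtain ⟨V₁, hV₁o, hV₁0, hV₁⟩ := exists_open_nhds_zero_half hW
    obtain ⟨V₂, hV₂o, hV₂0, hV₂⟩ := ih (hV₁o.mem_nhds hV₁0)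
    refine ⟨V₁ ∩ V₂, hV₁o.inter hV₂o, ⟨hV₁0, hV₂0⟩, ?_⟩
    intro f hf
    rw [Finset.sum_insert ha]
    exact hV₁ _ (hf a (Finset.mem_insert_self a F)).1 _
      (hV₂ f fun i hi => (hf i (Finset.mem_insert_of_mem hi)).2)

/-- Rolewicz's Lemma (general form): every completely metrizable abelian
topological group that is topologically generated by the union of countably
many topological subgroups, each topologically isomorphic to the circle group
`ℝ/ℤ`, is monothetic. -/
theorem rolewicz_omega_torus_monothetic
    (G : Type) [AddCommGroup G] [tG : TopologicalSpace G] [IsTopologicalAddGroup G]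
    (hmetr : ∃ m : MetricSpace G,
      m.toUniformSpace.toTopologicalSpace = tG ∧ @CompleteSpace G m.toUniformSpace)
    (T : ℕ → AddSubgroup G)
    (hcirc : ∀ i : ℕ, ∃ e : (T i) ≃+ AddCircle (1 : ℝ),
      Continuous e ∧ Continuous e.symm)
    (hgen : Dense ((⨆ i : ℕ, T i : AddSubgroup G) : Set G)) :
    ∃ x : G, Dense ((AddSubgroup.zmultiples x : AddSubgroup G) : Set G) := by
  classical
  obtain ⟨m, hmtop, hcomp⟩ := hmetr
  subst hmtop
  letI : MetricSpace G := m
  haveI : CompleteSpace G := hcomp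
  choose e he hesymm using hcirc
  -- Key density claim
  have key : ∀ g ∈ (⨆ i, T i : AddSubgroup G), ∀ y : G, ∀ r : ℝ, 0 < r →
      ∃ x : G, dist x y < r ∧ ∃ n : ℤ, n • x = g := by
    intro g hg y r hr
    obtain ⟨s, hsball, hsmem⟩ := Metric.dense_iff.mp hgen y r hr
    obtain ⟨Fs, fs0, hfs0, hs_eq⟩ := aux_decomp T hsmem
    obtain ⟨Fg, fg0, hfg0, hg_eq⟩ := aux_decomp T hg
    set F : Finset ℕ := Fs ∪ Fg with hF
    set fs : ℕ → G := fun i => if i ∈ Fs then fs0 i else 0 with hfs_def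
    set fg : ℕ → G := fun i => if i ∈ Fg then fg0 i else 0 with hfg_def
    have hfs : ∀ i, fs i ∈ T i := by
      intro i; rw [hfs_def]; dsimp only
      split
      · exact hfs0 i
      · exact zero_mem _
    have hfg : ∀ i, fg i ∈ T i := by
      intro i; rw [hfg_def]; dsimp only
      split
      · exact hfg0 i
      · exact zero_mem _
    have hs_eq' : s = ∑ i ∈ F, fs i := by
      rw [hs_eq, hfs_def]
      rw [Finset.sum_ite_mem, Finset.union_inter_cancel_left]
    have hg_eq' : g = ∑ i ∈ F, fg i := by
      rw [hg_eq, hfg_def]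
      rw [Finset.sum_ite_mem, Finset.union_inter_cancel_right]
    have hW : (fun z : G => s + z) ⁻¹' (Metric.ball y r) ∈ nhds (0:G) := by
      refine IsOpen.mem_nhds (Metric.isOpen_ball.preimage (continuous_const.add continuous_id)) ?_
      simpa using hsball
    obtain ⟨V, hVo, hV0, hV⟩ := aux_sum_nhds F hW
    have hQ : ∀ i : ℕ, ∃ δ : ℝ, 0 < δ ∧ ∀ c : AddCircle (1:ℝ),
        dist c (e i ⟨fs i, hfs i⟩) < δ → ((e i).symm c : G) - fs i ∈ V := by
      intro i
      have hcont : Continuous (fun c : AddCircle (1:ℝ) => ((e i).symm c : G) - fs i) :=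
        (continuous_subtype_val.comp (hesymm i)).sub continuous_const
      have hopen : IsOpen {c : AddCircle (1:ℝ) | ((e i).symm c : G) - fs i ∈ V} :=
        hVo.preimage hcont
      have hmem : e i ⟨fs i, hfs i⟩ ∈ {c : AddCircle (1:ℝ) | ((e i).symm c : G) - fs i ∈ V} := by
        show ((e i).symm (e i ⟨fs i, hfs i⟩) : G) - fs i ∈ V
        rw [AddEquiv.symm_apply_apply]
        simpa using hV0
      obtain ⟨δ, hδ0, hδ⟩ := Metric.isOpen_iff.mp hopen _ hmem
      exact ⟨δ, hδ0, fun c hc => hδ (Metric.mem_ball.mpr hc)⟩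
    choose δ hδ0 hδ using hQ
    have hN : ∀ i : ℕ, ∃ N : ℕ, 2/((N:ℝ)+1) < δ i := by
      intro i
      obtain ⟨N, hN⟩ := exists_nat_one_div_lt (show (0:ℝ) < δ i / 2 by linarith [hδ0 i])
      refine ⟨N, ?_⟩
      have : 2/((N:ℝ)+1) = 2 * (1/((N:ℝ)+1)) := by ring
      rw [this]
      linarith
    choose Nf hNf using hN
    set N : ℕ := F.sup Nf with hNdef
    have hNmono : ∀ i ∈ F, 2/((N:ℝ)+1) < δ i := by
      intro i hi
      refine lt_of_le_of_lt ?_ (hNf i)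
      have h1 : ((Nf i : ℕ) : ℝ) ≤ (N:ℝ) := by
        exact_mod_cast Finset.le_sup hi
      gcongr
    have hc : ∀ i : ℕ, ∃ c : AddCircle (1:ℝ), ((N:ℤ)+1) • c = e i ⟨fg i, hfg i⟩ ∧
        (i ∈ F → ((e i).symm c : G) - fs i ∈ V) := by
      intro i
      obtain ⟨c, hc1, hc2⟩ := aux_circle (e i ⟨fs i, hfs i⟩) (e i ⟨fg i, hfg i⟩) N
      exact ⟨c, hc1, fun hi => hδ i c (lt_of_le_of_lt hc2 (hNmono i hi))⟩
    choose c hc1 hc2 using hc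
    set x : G := ∑ i ∈ F, ((e i).symm (c i) : G) with hxdef
    refine ⟨x, ?_, (N:ℤ)+1, ?_⟩
    · have hxs : x = s + ∑ i ∈ F, (((e i).symm (c i) : G) - fs i) := by
        rw [Finset.sum_sub_distrib, hxdef]
        rw [hs_eq']
        abel
      have hx := hV (fun i => (((e i).symm (c i) : G) - fs i)) (fun i hi => hc2 i hi)
      simp only [Set.mem_preimage] at hx
      rw [hxs]
      exact Metric.mem_ball.mp hx
    · rw [hxdef, Finset.smul_sum]
      rw [hg_eq']
      refine Finset.sum_congr rfl fun i hi => ?_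
      have h1 : ((N:ℤ)+1) • ((e i).symm (c i) : G)
          = (((((N:ℤ)+1) • (e i).symm (c i) : T i)) : G) := by
        simp
      rw [h1, ← map_zsmul, hc1 i, AddEquiv.symm_apply_apply]
  -- Countable dense subgroup inside the supremum
  obtain ⟨C, hCc, hCd⟩ := TopologicalSpace.exists_countable_dense (AddCircle (1:ℝ))
  set E : Set G := ⋃ i : ℕ, (fun cc : AddCircle (1:ℝ) => ((e i).symm cc : G)) '' C with hE
  have hEc : E.Countable := Set.countable_iUnion (fun i => hCc.image _)
  set D : AddSubgroup G := AddSubgroup.closure E with hD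
  have hDc : (D : Set G).Countable := aux_countable_closure hEc
  have hDsub : D ≤ ⨆ i, T i := by
    rw [hD, AddSubgroup.closure_le]
    refine Set.iUnion_subset fun i => ?_
    rintro _ ⟨cc, _, rfl⟩
    exact le_iSup T i ((e i).symm cc).2
  have hT : ∀ i : ℕ, (T i : Set G) ⊆ closure (D : Set G) := by
    intro i u hu
    have h1 : u ∈ closure ((fun cc : AddCircle (1:ℝ) => ((e i).symm cc : G)) '' C) := by
      have h2 : u = (fun cc : AddCircle (1:ℝ) => ((e i).symm cc : G)) (e i ⟨u, hu⟩) := by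
        simp
      rw [h2]
      refine image_closure_subset_closure_image
        (continuous_subtype_val.comp (hesymm i)) ?_
      exact ⟨e i ⟨u, hu⟩, hCd _, rfl⟩
    refine closure_mono ?_ h1
    refine Set.Subset.trans ?_ AddSubgroup.subset_closure
    exact Set.subset_iUnion_of_subset i (by exact Set.Subset.rfl)
  have hDdense : Dense (D : Set G) := by
    have hsup : (⨆ i, T i : AddSubgroup G) ≤ D.topologicalClosure := by
      refine iSup_le fun i => ?_
      intro u hu
      exact hT i hu
    have h2 : ((⨆ i, T i : AddSubgroup G) : Set G) ⊆ closure (D : Set G) := by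
      intro u hu
      exact hsup hu
    have h3 := closure_mono h2
    rw [closure_closure, hgen.closure_eq] at h3
    rw [dense_iff_closure_eq]
    exact Set.univ_subset_iff.mp h3
  -- Baire category argument
  haveI : Countable ↥(D : Set G) := hDc.to_subtype
  haveI : Nonempty G := ⟨0⟩
  set U : ↥(D : Set G) × ℕ → Set G :=
    fun p => {x : G | ∃ n : ℤ, dist (n • x) (p.1 : G) < 1/((p.2:ℝ)+1)} with hU
  have hUo : ∀ p, IsOpen (U p) := by
    intro p
    have : U p = ⋃ n : ℤ,
        (fun x : G => n • x) ⁻¹' (Metric.ball (p.1 : G) (1/((p.2:ℝ)+1))) := by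
      ext z; simp [hU, Metric.mem_ball]
    rw [this]
    exact isOpen_iUnion fun n => Metric.isOpen_ball.preimage (continuous_zsmul n)
  have hUd : ∀ p, Dense (U p) := by
    intro p
    rw [Metric.dense_iff]
    intro y r hr
    obtain ⟨x, hxy, n, hnx⟩ := key (p.1 : G) (hDsub p.1.2) y r hr
    refine ⟨x, Metric.mem_ball.mpr hxy, n, ?_⟩
    rw [hnx, dist_self]
    positivity
  have hdense := dense_iInter_of_isOpen hUo hUd
  obtain ⟨x, hx⟩ := hdense.nonempty
  refine ⟨x, ?_⟩
  rw [Metric.dense_iff]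
  intro y r hr
  obtain ⟨g, hgball, hgD⟩ := Metric.dense_iff.mp hDdense y (r/2) (by linarith)
  obtain ⟨k, hk⟩ := exists_nat_one_div_lt (show (0:ℝ) < r/2 by linarith)
  have hx' := Set.mem_iInter.mp hx (⟨g, hgD⟩, k)
  obtain ⟨n, hn⟩ := hx'
  refine ⟨n • x, Metric.mem_ball.mpr ?_, AddSubgroup.zsmul_mem_zmultiples x n⟩
  have h1 : dist (n • x) y ≤ dist (n • x) g + dist g y := dist_triangle _ _ _
  have h2 : dist g y < r/2 := Metric.mem_ball.mp hgball
  have h3 : dist (n • x) g < 1/((k:ℝ)+1) := hn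
  linarith
end

section
/- If G is a topological group embedded as a topological subgroup of a monothetic group H, and F is a closed subgroup of G, then the quotient topological group G/F embeds as a topological subgroup of the quotient H/F̄, where F̄ is the closure of F in H; moreover H/F̄ is monothetic. Hence the class of topological groups embeddable into monothetic groups is closed under Hausdorff quotients by closed subgroups. -/
/-- If `G` is a topological subgroup of a monothetic (abelian) group `H` and
`F` is a closed subgroup of `G`, then `G ⧸ F` embeds as a topological subgroup
of `H ⧸ F̄` (where `F̄` is the closure of `F` in `H`), and `H ⧸ F̄` is again
monothetic. -/
theorem quotient_embeds_in_monothetic_quotient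
    (H : Type) [AddCommGroup H] [TopologicalSpace H] [IsTopologicalAddGroup H]
    (hmono : ∃ x : H, Dense ((AddSubgroup.zmultiples x : AddSubgroup H) : Set H))
    (G : AddSubgroup H) (F : AddSubgroup G) (hF : IsClosed (F : Set G)) :
    ∃ f : G ⧸ F →+ H ⧸ (F.map G.subtype).topologicalClosure,
      Function.Injective f ∧ Continuous f ∧
      (∀ U : Set (G ⧸ F), IsOpen U →
        ∃ V : Set (H ⧸ (F.map G.subtype).topologicalClosure),
          IsOpen V ∧ f '' U = V ∩ Set.range f) ∧
      (∃ y : H ⧸ (F.map G.subtype).topologicalClosure,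
        Dense ((AddSubgroup.zmultiples y) : Set (H ⧸ (F.map G.subtype).topologicalClosure))) := by
  classical
  set N : AddSubgroup H := (F.map G.subtype).topologicalClosure with hN
  -- the basic map G → H ⧸ N
  set π : H →+ H ⧸ N := QuotientAddGroup.mk' N with hπ
  have hker : ∀ g : G, g ∈ F → π.comp G.subtype g = 0 := by
    intro g hg
    have : (g : H) ∈ N := by
      apply AddSubgroup.le_topologicalClosure
      exact ⟨g, hg, rfl⟩
    simpa [π, QuotientAddGroup.eq_zero_iff] using this
  set f : G ⧸ F →+ H ⧸ N := QuotientAddGroup.lift F (π.comp G.subtype) hker with hf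
  have hfmk : ∀ g : G, f (QuotientAddGroup.mk g) = π (g : H) := fun g => rfl
  -- key fact: membership in N pulls back to F
  have hmem : ∀ g : G, (g : H) ∈ N → g ∈ F := by
    intro g hg
    have h1 : (g : H) ∈ closure ((↑) '' (F : Set G)) := by
      simpa [N, AddSubgroup.topologicalClosure] using hg
    have h2 : g ∈ closure (F : Set G) := by
      rw [Topology.IsEmbedding.subtypeVal.closure_eq_preimage_closure_image (F : Set G)]
      exact h1
    rwa [hF.closure_eq] at h2
  refine ⟨f, ?_, ?_, ?_, ?_⟩
  · -- injectivity
    rw [injective_iff_map_eq_zero]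
    intro a ha
    obtain ⟨g, rfl⟩ := QuotientAddGroup.mk_surjective a
    rw [hfmk] at ha
    have : (g : H) ∈ N := by
      simpa [π, QuotientAddGroup.eq_zero_iff] using ha
    simpa [QuotientAddGroup.eq_zero_iff] using hmem g this
  · -- continuity
    exact continuous_quot_lift _ ((continuous_quotient_mk').comp continuous_subtype_val)
  · -- openness onto image
    intro U hU
    have hU' : IsOpen ((QuotientAddGroup.mk : G → G ⧸ F) ⁻¹' U) :=
      hU.preimage continuous_quot_mk
    obtain ⟨W, hWopen, hWeq⟩ := isOpen_induced_iff.mp hU'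
    refine ⟨π '' W, QuotientAddGroup.isOpenMap_coe W hWopen, ?_⟩
    ext z
    constructor
    · rintro ⟨u, huU, rfl⟩
      obtain ⟨g, rfl⟩ := QuotientAddGroup.mk_surjective u
      have hgW : (g : H) ∈ W := by
        have : g ∈ ((↑) : G → H) ⁻¹' W := by rw [hWeq]; exact huU
        exact this
      exact ⟨⟨(g : H), hgW, rfl⟩, ⟨QuotientAddGroup.mk g, rfl⟩⟩
    · rintro ⟨⟨w, hwW, hwz⟩, ⟨a, rfl⟩⟩
      obtain ⟨g, rfl⟩ := QuotientAddGroup.mk_surjective a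
      rw [hfmk] at hwz ⊢
      -- π w = π g, so g - w ∈ N = closure of F in H
      have hgw : (g : H) - w ∈ N := by
        rw [← QuotientAddGroup.eq_iff_sub_mem]
        exact hwz.symm
      have hgwcl : (g : H) - w ∈ closure ((↑) '' (F : Set G)) := by
        simpa [N, AddSubgroup.topologicalClosure] using hgw
      -- (g : H) - W is an open neighborhood of g - w, so it meets F
      have hopen : IsOpen ((fun h => (g : H) - h) ⁻¹' W) :=
        hWopen.preimage (by continuity)
      have hmemnbhd : ((g : H) - w) ∈ (fun h => (g : H) - h) ⁻¹' W := by
        simp [hwW]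
      obtain ⟨m, hmW, hm⟩ :=
        mem_closure_iff.mp hgwcl ((fun h => (g : H) - h) ⁻¹' W) hopen hmemnbhd
      obtain ⟨m', hm'F, rfl⟩ := hm
      -- g - m' ∈ W ∩ G, class equals that of g
      have hgm'W : ((g - m' : G) : H) ∈ W := by simpa using hmW
      have hgm'U : QuotientAddGroup.mk (g - m') ∈ U := by
        have : (g - m' : G) ∈ ((↑) : G → H) ⁻¹' W := hgm'W
        rw [hWeq] at this; exact this
      refine ⟨QuotientAddGroup.mk (g - m'), hgm'U, ?_⟩
      rw [hfmk]
      have : ((g - m' : G) : H) - (g : H) ∈ N := by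
        have : (m' : H) ∈ N := by
          apply AddSubgroup.le_topologicalClosure
          exact ⟨m', hm'F, rfl⟩
        simpa using N.neg_mem this
      exact QuotientAddGroup.eq_iff_sub_mem.mpr this
  · -- monothetic
    obtain ⟨x, hx⟩ := hmono
    refine ⟨π x, ?_⟩
    have hd : Dense (π '' ((AddSubgroup.zmultiples x : AddSubgroup H) : Set H)) := by
      have hsurj : Function.Surjective (π : H → H ⧸ N) := QuotientAddGroup.mk'_surjective N
      exact (hsurj.denseRange).dense_image continuous_quot_mk hx
    have himg : π '' ((AddSubgroup.zmultiples x : AddSubgroup H) : Set H)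
        = ((AddSubgroup.zmultiples (π x) : AddSubgroup (H ⧸ N)) : Set (H ⧸ N)) := by
      rw [← AddMonoidHom.map_zmultiples]
      rfl
    rwa [himg] at hd
end

section
/- Let H be a topological abelian group, D a subgroup of H, and E a subgroup of H with D ∩ E = {0}. Suppose that the neighborhoods W of zero satisfying (D + W) ∩ E = W ∩ E form a neighborhood basis at zero of H. Then the restriction to E of the quotient homomorphism π : H → H/D is a topological group isomorphism of E onto its image π(E) with the subspace topology from H/D. -/
open Pointwise

/-- If `D` and `E` are subgroups of an abelian topological group `H` with
`D ∩ E = {0}`, and the neighbourhoods `W` of zero with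
`(D + W) ∩ E = W ∩ E` form a neighbourhood basis at zero, then the restriction
to `E` of the quotient homomorphism `π : H → H ⧸ D` is a topological group
isomorphism of `E` onto its image (injective, continuous and open onto the
image with the subspace topology). -/
theorem quotient_restriction_embedding
    (H : Type) [AddCommGroup H] [TopologicalSpace H] [IsTopologicalAddGroup H]
    (D E : AddSubgroup H) (hDE : D ⊓ E = ⊥)
    (hbasis : ∀ V ∈ nhds (0 : H), ∃ W ∈ nhds (0 : H), W ⊆ V ∧
      ((D : Set H) + W) ∩ (E : Set H) = W ∩ (E : Set H)) :
    Function.Injective (fun e : E => ((e : H) : H ⧸ D)) ∧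
    Continuous (fun e : E => ((e : H) : H ⧸ D)) ∧
    (∀ U : Set E, IsOpen U → ∃ V : Set (H ⧸ D), IsOpen V ∧
      (fun e : E => ((e : H) : H ⧸ D)) '' U =
        V ∩ Set.range (fun e : E => ((e : H) : H ⧸ D))) := by
  classical
  refine ⟨?_, ?_, ?_⟩
  · -- injectivity
    intro a b hab
    have hd : -(a : H) + (b : H) ∈ D := (QuotientAddGroup.eq).mp hab
    have he : -(a : H) + (b : H) ∈ E := add_mem (neg_mem a.2) b.2
    have hm : -(a : H) + (b : H) ∈ D ⊓ E := ⟨hd, he⟩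
    rw [hDE] at hm
    have h0 : -(a : H) + (b : H) = 0 := hm
    have : (a : H) = b := by linear_combination (norm := abel) -h0
    exact Subtype.ext this
  · exact continuous_quotient_mk'.comp continuous_subtype_val
  · intro U hU
    obtain ⟨S, hS, rfl⟩ := isOpen_induced_iff.mp hU
    have hchoice : ∀ e : H, e ∈ S → ∃ W ∈ nhds (0 : H),
        W ⊆ (fun w => e + w) ⁻¹' S ∧
        ((D : Set H) + W) ∩ (E : Set H) = W ∩ (E : Set H) := by
      intro e he
      refine hbasis _ ?_
      exact (continuous_add_left e).continuousAt (x := (0 : H)) |>.preimage_mem_nhds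
        (by simpa using hS.mem_nhds he)
    choose! W hWnhds hWsub hWeq using hchoice
    set T : Set H := ⋃ e ∈ (E : Set H) ∩ S, (fun w => e + w) '' interior (W e) with hT
    have hTopen : IsOpen T := by
      refine isOpen_biUnion fun e _ => ?_
      exact (isOpenMap_add_left e) _ isOpen_interior
    refine ⟨(QuotientAddGroup.mk : H → H ⧸ D) '' T,
      QuotientAddGroup.isOpenMap_coe T hTopen, ?_⟩
    ext q
    constructor
    · rintro ⟨⟨x, hxE⟩, hxU, rfl⟩
      have hxS : x ∈ S := hxU
      constructor
      · refine ⟨x, ?_, rfl⟩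
        refine Set.mem_biUnion ⟨hxE, hxS⟩ ?_
        exact ⟨0, mem_interior_iff_mem_nhds.mpr (hWnhds x hxS), by simp⟩
      · exact ⟨⟨x, hxE⟩, rfl⟩
    · rintro ⟨⟨x, hxT, hxq⟩, ⟨f, hfq⟩⟩
      rw [hT] at hxT
      simp only [Set.mem_iUnion, Set.mem_image, Set.mem_inter_iff] at hxT
      obtain ⟨e, ⟨heE, heS⟩, w, hw, hx⟩ := hxT
      have hπ : ((x : H) : H ⧸ D) = ((f : H) : H ⧸ D) := by rw [hxq]; exact hfq.symm
      have hd : -(x : H) + (f : H) ∈ D := (QuotientAddGroup.eq).mp hπ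
      have hwW : w ∈ W e := interior_subset hw
      -- f - e ∈ (D + W e) ∩ E
      have hmem : (f : H) - e ∈ ((D : Set H) + W e) ∩ (E : Set H) := by
        constructor
        · refine Set.mem_add.mpr ⟨-(x : H) + (f : H), hd, w, hwW, ?_⟩
          have : x = e + w := hx.symm
          rw [this]; abel
        · exact sub_mem f.2 heE
      rw [hWeq e heS] at hmem
      have hfS : (f : H) ∈ S := by
        have := hWsub e heS hmem.1
        simpa using this
      exact ⟨f, hfS, hfq⟩
end

section
/- Let E be a separable topological real vector space with countable dense subset {x_m : m ∈ ℕ₊}, let H = E ⊕ ℓ²(ℕ₊×ℕ₊) with the product topology, and let D be the subgroup of H generated by the elements ξ_{m,n} = (n·x_m, e_{m,n}) for m,n ∈ ℕ₊, where e_{m,n} are the standard orthonormal basis vectors of ℓ². Then D is a discrete subgroup of H. -/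
/-- Let `E` be a separable topological real vector space with dense sequence
`x`, let `H = E × ℓ²(ℕ₊×ℕ₊)`, and let `D` be the subgroup of `H` generated by
the elements `ξ_{m,n} = (n • x_m, e_{m,n})` (`n ≥ 1`).  Then `D` is a discrete
subgroup of `H`.  (Positive integers are encoded by `n+1` for `n : ℕ`.) -/
theorem generated_subgroup_discrete
    (E : Type) [AddCommGroup E] [Module ℝ E] [TopologicalSpace E]
    [IsTopologicalAddGroup E] [ContinuousSMul ℝ E]
    (x : ℕ → E) (hx : DenseRange x) :
    DiscreteTopology
      (AddSubgroup.closure (Set.range (fun p : ℕ × ℕ =>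
        (((p.2 + 1) • x p.1, lp.single 2 p (1 : ℝ)) :
          E × lp (fun _ : ℕ × ℕ => ℝ) 2)))) := by
  set ξ : ℕ × ℕ → E × lp (fun _ : ℕ × ℕ => ℝ) 2 :=
    fun p : ℕ × ℕ => (((p.2 + 1) • x p.1, lp.single 2 p (1 : ℝ))) with hξ
  -- Every element of the generated subgroup is a finite ℤ-combination of the ξ's.
  have key : ∀ g ∈ AddSubgroup.closure (Set.range ξ),
      ∃ c : ℕ × ℕ →₀ ℤ, (c.sum fun p a => a • ξ p) = g := by
    intro g hg
    have : g ∈ Submodule.span ℤ (Set.range ξ) := by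
      rw [← Submodule.mem_toAddSubgroup, Submodule.span_int_eq_addSubgroupClosure]
      exact hg
    exact Finsupp.mem_span_range_iff_exists_finsupp.mp this
  -- Evaluation at a point q, as an additive homomorphism
  have evalHom : ∀ q : ℕ × ℕ, ∃ φ : lp (fun _ : ℕ × ℕ => ℝ) 2 →+ ℝ,
      ∀ v, φ v = v q := fun q =>
    ⟨AddMonoidHom.mk' (fun v => v q) (fun a b => by
      simp [lp.coeFn_add]), fun v => rfl⟩
  -- Coordinates of elements of the subgroup
  have coord : ∀ (c : ℕ × ℕ →₀ ℤ) (q : ℕ × ℕ),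
      ((c.sum fun p a => a • ξ p).2 : (ℕ × ℕ) → ℝ) q = (c q : ℝ) := by
    intro c q
    obtain ⟨φ, hφ⟩ := evalHom q
    have h2 : (c.sum fun p a => a • ξ p).2 = c.sum fun p a => a • (ξ p).2 := by
      classical
      simp [Finsupp.sum, Prod.snd_sum]
    rw [h2, ← hφ, map_finsuppSum]
    simp only [map_zsmul]
    simp only [hφ]
    classical
    rw [Finsupp.sum, Finset.sum_eq_single q
      (fun b _ hbq => by
        rw [lp.single_apply_ne 2 b _ (Ne.symm hbq), smul_zero])
      (fun h => by simp [Finsupp.notMem_support_iff.mp h])]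
    rw [lp.single_apply_self]
    simp
  -- nonzero elements have second coordinate of norm ≥ 1
  have big : ∀ g ∈ AddSubgroup.closure (Set.range ξ), g ≠ 0 → 1 ≤ ‖g.2‖ := by
    intro g hg hne
    obtain ⟨c, rfl⟩ := key g hg
    have hc : c ≠ 0 := by
      rintro rfl
      simp [Finsupp.sum_zero_index] at hne
    obtain ⟨q, hq⟩ : ∃ q, c q ≠ 0 := by
      by_contra h
      push_neg at h
      exact hc (Finsupp.ext h)
    have h1 : (1 : ℝ) ≤ |(c q : ℝ)| := by
      rw [← Int.cast_abs]
      exact_mod_cast Int.one_le_abs hq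
    calc (1 : ℝ) ≤ |(c q : ℝ)| := h1
      _ = ‖((c.sum fun p a => a • ξ p).2 : (ℕ × ℕ) → ℝ) q‖ := by
            rw [coord c q]; simp
      _ ≤ ‖(c.sum fun p a => a • ξ p).2‖ :=
            lp.norm_apply_le_norm two_ne_zero _ q
  rw [discreteTopology_iff_isOpen_singleton_zero]
  have hU : IsOpen {h : E × lp (fun _ : ℕ × ℕ => ℝ) 2 | ‖h.2‖ < 1} := by
    have : Continuous fun h : E × lp (fun _ : ℕ × ℕ => ℝ) 2 => ‖h.2‖ :=
      continuous_norm.comp continuous_snd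
    exact isOpen_lt this continuous_const
  have : ({0} : Set (AddSubgroup.closure (Set.range ξ))) =
      Subtype.val ⁻¹' {h : E × lp (fun _ : ℕ × ℕ => ℝ) 2 | ‖h.2‖ < 1} := by
    ext ⟨g, hg⟩
    simp only [Set.mem_singleton_iff, Set.mem_preimage, Set.mem_setOf_eq]
    constructor
    · intro h
      have hg0 : g = (0 : E × lp (fun _ : ℕ × ℕ => ℝ) 2) := congrArg Subtype.val h
      rw [hg0]; simp
    · intro h
      by_contra hne
      have hgne : g ≠ 0 := by
        intro h0
        exact hne (Subtype.ext h0)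
      exact absurd h (not_lt.mpr (big g hg hgne))
  rw [this]
  exact hU.preimage continuous_subtype_val
end

section
/- With E, H = E ⊕ ℓ²(ℕ₊×ℕ₊), and D the subgroup generated by ξ_{m,n} = (n·x_m, e_{m,n}) as above, the linear span of D is dense in H. -/
open scoped InnerProductSpace

lemma dense_span_lp_single :
    (Submodule.span ℝ (Set.range (fun p : ℕ × ℕ =>
      lp.single 2 p (1 : ℝ)))).topologicalClosure = ⊤ := by
  rw [Submodule.topologicalClosure_eq_top_iff, Submodule.eq_bot_iff]
  intro f hf
  ext p
  have := hf (lp.single 2 p (1 : ℝ)) (Submodule.subset_span ⟨p, rfl⟩)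
  rw [lp.inner_single_left] at this
  simpa using this

lemma norm_lp_single_one (q : ℕ × ℕ) :
    ‖(lp.single 2 q (1 : ℝ) : lp (fun _ : ℕ × ℕ => ℝ) 2)‖ = 1 := by
  have := lp.norm_single (p := 2) (E := fun _ : ℕ × ℕ => ℝ) (by norm_num)
    q (1 : ℝ)
  simpa using this

/-- With `E` a separable topological real vector space with dense sequence `x`,
`H = E × ℓ²(ℕ₊×ℕ₊)` and `D` the subgroup generated by the elements
`ξ_{m,n} = (n • x_m, e_{m,n})` (`n ≥ 1`), the linear span of `D` is dense in
`H`.  (Positive integers are encoded by `n+1` for `n : ℕ`.) -/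
theorem span_of_generated_subgroup_dense
    (E : Type) [AddCommGroup E] [Module ℝ E] [TopologicalSpace E]
    [IsTopologicalAddGroup E] [ContinuousSMul ℝ E]
    (x : ℕ → E) (hx : DenseRange x) :
    Dense ((Submodule.span ℝ (Set.range (fun p : ℕ × ℕ =>
        (((p.2 + 1) • x p.1, lp.single 2 p (1 : ℝ)) :
          E × lp (fun _ : ℕ × ℕ => ℝ) 2))) :
      Submodule ℝ (E × lp (fun _ : ℕ × ℕ => ℝ) 2)) :
        Set (E × lp (fun _ : ℕ × ℕ => ℝ) 2)) := by
  set L := lp (fun _ : ℕ × ℕ => ℝ) 2 with hLdef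
  set S := Submodule.span ℝ (Set.range (fun p : ℕ × ℕ =>
      (((p.2 + 1) • x p.1, lp.single 2 p (1 : ℝ)) : E × L)))
  set C := S.topologicalClosure with hCdef
  have hCclosed : IsClosed (C : Set (E × L)) := S.isClosed_topologicalClosure
  -- membership of generators
  have hgen : ∀ p : ℕ × ℕ,
      (((p.2 + 1) • x p.1, lp.single 2 p (1 : ℝ)) : E × L) ∈ C :=
    fun p => Submodule.le_topologicalClosure S (Submodule.subset_span ⟨p, rfl⟩)
  -- (x m, 0) ∈ C
  have hx0 : ∀ m : ℕ, ((x m, 0) : E × L) ∈ C := by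
    intro m
    have hmem : ∀ n : ℕ,
        ((x m, ((n : ℝ) + 1)⁻¹ • lp.single 2 (m, n) (1 : ℝ)) : E × L) ∈ C := by
      intro n
      have h := C.smul_mem (((n : ℝ) + 1)⁻¹) (hgen (m, n))
      have hne : ((n : ℝ) + 1) ≠ 0 := by positivity
      have hfst : (((n : ℝ) + 1)⁻¹) • ((n + 1) • x m) = x m := by
        rw [← Nat.cast_smul_eq_nsmul ℝ, smul_smul]
        push_cast
        rw [inv_mul_cancel₀ hne, one_smul]
      simpa [Prod.smul_mk, hfst] using h
    have htend : Filter.Tendsto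
        (fun n : ℕ => ((x m, ((n : ℝ) + 1)⁻¹ • lp.single 2 (m, n) (1 : ℝ)) : E × L))
        Filter.atTop (nhds ((x m, 0) : E × L)) := by
      refine Filter.Tendsto.prodMk_nhds tendsto_const_nhds ?_
      rw [tendsto_zero_iff_norm_tendsto_zero]
      have h1 : ∀ n : ℕ,
          ‖((n : ℝ) + 1)⁻¹ • (lp.single 2 ((m, n) : ℕ × ℕ) (1 : ℝ) : L)‖
            = ((n : ℝ) + 1)⁻¹ := by
        intro n
        rw [norm_smul, norm_lp_single_one, mul_one, Real.norm_eq_abs,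
          abs_of_pos (by positivity)]
      simp only [h1]
      simpa [one_div] using (tendsto_one_div_add_atTop_nhds_zero_nat :
        Filter.Tendsto (fun n : ℕ => 1 / ((n : ℝ) + 1)) Filter.atTop (nhds 0))
    exact hCclosed.mem_of_tendsto htend (Filter.Eventually.of_forall hmem)
  -- (e, 0) ∈ C for all e
  have hE0 : ∀ e : E, ((e, 0) : E × L) ∈ C := by
    intro e
    have hcont : Continuous (fun e : E => ((e, 0) : E × L)) :=
      continuous_id.prodMk continuous_const
    have hclosed : IsClosed ((fun e : E => ((e, 0) : E × L)) ⁻¹' (C : Set (E × L))) :=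
      hCclosed.preimage hcont
    have hsub : Set.range x ⊆
        (fun e : E => ((e, 0) : E × L)) ⁻¹' (C : Set (E × L)) := by
      rintro _ ⟨m, rfl⟩; exact hx0 m
    exact hclosed.closure_subset_iff.mpr hsub (hx e)
  -- (0, single p 1) ∈ C
  have hsing : ∀ p : ℕ × ℕ, ((0, lp.single 2 p (1 : ℝ)) : E × L) ∈ C := by
    intro p
    have := C.sub_mem (hgen p) (hE0 ((p.2 + 1) • x p.1))
    simpa using this
  -- {0} × L ⊆ C
  have hL : ∀ f : L, ((0, f) : E × L) ∈ C := by
    intro f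
    have hcont : Continuous (fun f : L => ((0, f) : E × L)) :=
      continuous_const.prodMk continuous_id
    have hclosed : IsClosed ((fun f : L => ((0, f) : E × L)) ⁻¹' (C : Set (E × L))) :=
      hCclosed.preimage hcont
    have hsub : ((Submodule.span ℝ (Set.range (fun p : ℕ × ℕ =>
        lp.single 2 p (1 : ℝ)))) : Set L) ⊆
        (fun f : L => ((0, f) : E × L)) ⁻¹' (C : Set (E × L)) := by
      intro g hg
      induction hg using Submodule.span_induction with
      | mem y hy => obtain ⟨p, rfl⟩ := hy; exact hsing p
      | zero => exact C.zero_mem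
      | add a b _ _ ha hb =>
          have := C.add_mem ha hb
          simpa using this
      | smul c a _ ha =>
          have := C.smul_mem c ha
          simpa using this
    have hmemcl : f ∈ closure ((Submodule.span ℝ (Set.range (fun p : ℕ × ℕ =>
        lp.single 2 p (1 : ℝ)))) : Set L) := by
      have h := dense_span_lp_single
      have h' : closure ((Submodule.span ℝ (Set.range (fun p : ℕ × ℕ =>
          lp.single 2 p (1 : ℝ)))) : Set L) =
          ((⊤ : Submodule ℝ L) : Set L) := by
        rw [← Submodule.topologicalClosure_coe, h]
      rw [h']
      trivial
    exact hclosed.closure_subset_iff.mpr hsub hmemcl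
  -- conclude
  rw [Submodule.dense_iff_topologicalClosure_eq_top]
  rw [eq_top_iff]
  rintro ⟨e, f⟩ -
  have := C.add_mem (hE0 e) (hL f)
  simpa using this
end

section
/- With H = E ⊕ ℓ²(ℕ₊×ℕ₊), D the subgroup generated by the ξ_{m,n} = (n·x_m, e_{m,n}), d a translation-invariant continuous pseudometric on E, and d̃ the pseudometric on H given by d̃((x₁,y₁),(x₂,y₂)) = d(x₁,x₂) + ‖y₁−y₂‖: for every nonzero x ∈ D and every y ∈ E (identified with E × {0} ⊆ H), one has d̃(x, y) ≥ 1. Consequently the set W = {z ∈ H : d̃(z,0) < 1} satisfies (D + W) ∩ E = W ∩ E. -/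
open Pointwise

/-- The generators `ξ_{m,n} = (n • x_m, e_{m,n})` of the subgroup `D` of
`H = E × ℓ²(ℕ₊×ℕ₊)` (positive integers encoded by `n+1`, `n : ℕ`). -/
noncomputable def xiGen (E : Type) [AddCommGroup E] [Module ℝ E] (x : ℕ → E) :
    ℕ × ℕ → E × lp (fun _ : ℕ × ℕ => ℝ) 2 :=
  fun p => ((p.2 + 1) • x p.1, lp.single 2 p (1 : ℝ))

/-- With `d̃((x₁,y₁),(x₂,y₂)) = d(x₁,x₂) + ‖y₁-y₂‖` for a translation-invariant
continuous pseudometric `d` on `E`: every nonzero element of the subgroup `D`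
generated by the `ξ_{m,n}` is at `d̃`-distance at least `1` from every point of
`E × {0} ⊆ H`; consequently `W = {z | d̃(z,0) < 1}` satisfies
`(D + W) ∩ E = W ∩ E`. -/
theorem distance_of_D_from_E
    (E : Type) [AddCommGroup E] [Module ℝ E] [TopologicalSpace E]
    [IsTopologicalAddGroup E] [ContinuousSMul ℝ E]
    (x : ℕ → E) (hx : DenseRange x)
    (d : E → E → ℝ)
    (hd_self : ∀ a : E, d a a = 0)
    (hd_comm : ∀ a b : E, d a b = d b a)
    (hd_tri : ∀ a b c : E, d a c ≤ d a b + d b c)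
    (hd_inv : ∀ a b c : E, d (a + c) (b + c) = d a b)
    (hd_cont : Continuous (fun p : E × E => d p.1 p.2)) :
    (∀ z ∈ (AddSubgroup.closure (Set.range (xiGen E x)) :
        Set (E × lp (fun _ : ℕ × ℕ => ℝ) 2)),
      z ≠ 0 → ∀ y : E, d z.1 y + ‖z.2‖ ≥ 1) ∧
    ((AddSubgroup.closure (Set.range (xiGen E x)) :
        Set (E × lp (fun _ : ℕ × ℕ => ℝ) 2)) +
       {z : E × lp (fun _ : ℕ × ℕ => ℝ) 2 | d z.1 0 + ‖z.2‖ < 1}) ∩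
      {p : E × lp (fun _ : ℕ × ℕ => ℝ) 2 | p.2 = 0} =
      {z : E × lp (fun _ : ℕ × ℕ => ℝ) 2 | d z.1 0 + ‖z.2‖ < 1} ∩
      {p : E × lp (fun _ : ℕ × ℕ => ℝ) 2 | p.2 = 0} := by
  have hd_nonneg : ∀ a b : E, 0 ≤ d a b := by
    intro a b
    have h := hd_tri a b a
    rw [hd_self a, hd_comm b a] at h
    linarith
  -- Key fact: every nonzero element of D has ℓ²-component of norm at least 1.
  have key : ∀ z ∈ (AddSubgroup.closure (Set.range (xiGen E x)) :
      Set (E × lp (fun _ : ℕ × ℕ => ℝ) 2)), z ≠ 0 → (1 : ℝ) ≤ ‖z.2‖ := by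
    intro z hz hz0
    rw [← Submodule.span_int_eq_addSubgroupClosure] at hz
    replace hz : z ∈ Submodule.span ℤ (Set.range (xiGen E x)) := hz
    obtain ⟨c, hc⟩ := Finsupp.mem_span_range_iff_exists_finsupp.mp hz
    have hc0 : c ≠ 0 := by
      rintro rfl
      apply hz0
      rw [← hc, Finsupp.sum_zero_index]
    obtain ⟨q, hq⟩ := Finsupp.support_nonempty_iff.mpr hc0
    have hqc : c q ≠ 0 := Finsupp.mem_support_iff.mp hq
    -- compute the coordinate of z.2 at q
    have hz2 : z.2 = ∑ i ∈ c.support, (c i : ℝ) • lp.single 2 i (1 : ℝ) := by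
      rw [← hc]
      rw [Finsupp.sum]
      rw [Prod.snd_sum]
      refine Finset.sum_congr rfl fun i _ => ?_
      show (c i • xiGen E x i).2 = _
      rw [Prod.smul_snd]
      rw [← Int.cast_smul_eq_zsmul ℝ]
      rfl
    have hcoord : (z.2 : ∀ _ : ℕ × ℕ, ℝ) q = (c q : ℝ) := by
      rw [hz2, lp.coeFn_sum, Finset.sum_apply]
      have : ∀ i ∈ c.support, (((c i : ℝ) • lp.single 2 i (1 : ℝ) :
            lp (fun _ : ℕ × ℕ => ℝ) 2) : ∀ _ : ℕ × ℕ, ℝ) q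
          = if i = q then (c i : ℝ) else 0 := by
        intro i _
        rw [lp.coeFn_smul, Pi.smul_apply]
        by_cases h : i = q
        · subst h; rw [lp.single_apply_self, if_pos rfl, smul_eq_mul, mul_one]
        · rw [lp.single_apply_ne 2 i _ (Ne.symm h), if_neg h, smul_zero]
      rw [Finset.sum_congr rfl this, Finset.sum_ite_eq' c.support q (fun i => (c i : ℝ)),
        if_pos hq]
    have h1 : (1 : ℝ) ≤ |(c q : ℝ)| := by
      rw [← Int.cast_abs]
      exact_mod_cast Int.one_le_abs hqc
    calc (1 : ℝ) ≤ |(c q : ℝ)| := h1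
      _ = ‖(z.2 : ∀ _ : ℕ × ℕ, ℝ) q‖ := by rw [hcoord]; simp [Real.norm_eq_abs]
      _ ≤ ‖z.2‖ := lp.norm_apply_le_norm (by norm_num) z.2 q
  have part1 : ∀ z ∈ (AddSubgroup.closure (Set.range (xiGen E x)) :
      Set (E × lp (fun _ : ℕ × ℕ => ℝ) 2)),
      z ≠ 0 → ∀ y : E, d z.1 y + ‖z.2‖ ≥ 1 := by
    intro z hz hz0 y
    have h1 := key z hz hz0
    have h2 := hd_nonneg z.1 y
    linarith
  refine ⟨part1, ?_⟩
  ext p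
  simp only [Set.mem_inter_iff, Set.mem_add, Set.mem_setOf_eq, SetLike.mem_coe]
  constructor
  · rintro ⟨⟨a, ha, w, hw, rfl⟩, hp2⟩
    refine ⟨?_, hp2⟩
    by_cases h0 : a = 0
    · subst h0; simpa using hw
    · exfalso
      have h1 := part1 a ha h0 (a.1 + w.1)
      have hw2 : w.2 = -a.2 := by
        have : a.2 + w.2 = 0 := hp2
        exact eq_neg_of_add_eq_zero_right this
      have hna : ‖a.2‖ = ‖w.2‖ := by rw [hw2, norm_neg]
      have hda : d a.1 (a.1 + w.1) = d w.1 0 := by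
        rw [hd_comm]
        have := hd_inv w.1 0 a.1
        rw [zero_add] at this
        rw [← this, add_comm w.1 a.1]
      rw [hda, hna] at h1
      linarith
  · rintro ⟨hw, hp2⟩
    exact ⟨⟨0, AddSubgroup.zero_mem _, p, hw, zero_add p⟩, hp2⟩
end

section
/- Every separable metrizable real topological vector space embeds, as a topological group, into a monothetic metrizable topological group. -/
open Filter Set Topology

namespace MME

variable {E : Type} [AddCommGroup E] [TopologicalSpace E] [IsTopologicalAddGroup E]

/-- The cost of a decomposition list. -/
noncomputable def costOf (l : List (E × ℕ)) : ℝ := (l.map fun p => ((2:ℝ)⁻¹) ^ p.2).sum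

def valOf (l : List (E × ℕ)) : E := (l.map Prod.fst).sum

lemma costOf_nonneg (l : List (E × ℕ)) : 0 ≤ costOf l := by
  apply List.sum_nonneg
  intro x hx
  simp only [List.mem_map] at hx
  obtain ⟨p, -, rfl⟩ := hx
  positivity

lemma costOf_append (l l' : List (E × ℕ)) : costOf (l ++ l') = costOf l + costOf l' := by
  simp [costOf]

lemma valOf_append (l l' : List (E × ℕ)) : valOf (l ++ l') = valOf l + valOf l' := by
  simp [valOf]

lemma chain_aux (V : ℕ → Set E) (h0 : ∀ n, (0:E) ∈ V n)
    (hmono : ∀ n, V (n+1) ⊆ V n)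
    (htriple : ∀ n a b c, a ∈ V (n+1) → b ∈ V (n+1) → c ∈ V (n+1) → a + b + c ∈ V n) :
    ∀ (N : ℕ) (l : List (E × ℕ)), l.length ≤ N → ∀ n : ℕ,
      (∀ p ∈ l, p.1 ∈ V p.2) → costOf l < (2:ℝ)⁻¹ ^ n → valOf l ∈ V n := by
  have hmono' : ∀ {n k : ℕ}, n ≤ k → V k ⊆ V n := by
    intro n k hnk
    induction hnk with
    | refl => exact fun _ h => h
    | step h ih => exact fun x hx => ih (hmono _ hx)
  intro N
  induction N with
  | zero =>
    intro l hlen n _ _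
    have : l = [] := List.eq_nil_of_length_eq_zero (Nat.le_zero.mp hlen)
    subst this
    simpa [valOf] using h0 n
  | succ N ih =>
    intro l hlen n hmem hcost
    classical
    by_cases hA : costOf l < (2:ℝ)⁻¹ ^ (n+1)
    · rcases l.eq_nil_or_concat with rfl | ⟨l', p, rfl⟩
      · simpa [valOf] using h0 n
      · simp only [List.concat_eq_append] at hlen hmem hcost hA ⊢
        have hc := costOf_append l' [p]
        have hcp : costOf [p] = (2:ℝ)⁻¹ ^ p.2 := by simp [costOf]
        have hl'cost : costOf l' < (2:ℝ)⁻¹ ^ (n+1) := by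
          have := costOf_nonneg [p]
          rw [hc] at hA
          linarith
        have hl'len : l'.length ≤ N := by
          have := hlen
          simp only [List.length_append, List.length_singleton] at this
          omega
        have hl'mem : ∀ q ∈ l', q.1 ∈ V q.2 := fun q hq => hmem q (by simp [hq])
        have ha : valOf l' ∈ V (n+1) := ih l' hl'len (n+1) hl'mem hl'cost
        have hpk : (2:ℝ)⁻¹ ^ p.2 < (2:ℝ)⁻¹ ^ (n+1) := by
          have := costOf_nonneg l'
          rw [hc, hcp] at hA
          linarith
        have hp2 : n + 1 < p.2 :=
          (pow_lt_pow_iff_right_of_lt_one₀ (by norm_num) (by norm_num)).mp hpk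
        have hb : p.1 ∈ V (n+1) := hmono' hp2.le (hmem p (by simp))
        have := htriple n (valOf l') p.1 0 ha hb (h0 (n+1))
        simpa [valOf_append, valOf] using this
    · push_neg at hA
      have hex : ∃ j, (2:ℝ)⁻¹ ^ (n+1) ≤ costOf (l.take j) :=
        ⟨l.length, by simpa using hA⟩
      set j₀ := Nat.find hex with hj₀
      have hspec : (2:ℝ)⁻¹ ^ (n+1) ≤ costOf (l.take j₀) := Nat.find_spec hex
      have hj₀pos : 0 < j₀ := by
        rcases Nat.eq_zero_or_pos j₀ with h | h
        · exfalso
          rw [h] at hspec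
          simp only [List.take_zero] at hspec
          have : costOf ([] : List (E × ℕ)) = 0 := by simp [costOf]
          rw [this] at hspec
          have : (0:ℝ) < (2:ℝ)⁻¹ ^ (n+1) := by positivity
          linarith
        · exact h
      have hj₀le : j₀ ≤ l.length := Nat.find_min' hex (by simpa using hA)
      set i := j₀ - 1 with hi
      have hij : j₀ = i + 1 := by omega
      have hilt : i < l.length := by omega
      have htake : l.take j₀ = l.take i ++ [l[i]] := by
        rw [hij]
        rw [List.take_succ]
        congr 1
        simp [List.getElem?_eq_getElem hilt]
      have hprefcost : costOf (l.take i) < (2:ℝ)⁻¹ ^ (n+1) := by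
        have := Nat.find_min hex (show i < j₀ by omega)
        push_neg at this
        exact this
      have hsplitcost : costOf l = costOf (l.take j₀) + costOf (l.drop j₀) := by
        conv_lhs => rw [← List.take_append_drop j₀ l]
        exact costOf_append _ _
      have htakele : costOf (l.take j₀) ≤ costOf l := by
        have := costOf_nonneg (l.drop j₀)
        linarith
      have helemcost : (2:ℝ)⁻¹ ^ (l[i]).2 < (2:ℝ)⁻¹ ^ n := by
        have h1 : costOf (l.take j₀) = costOf (l.take i) + (2:ℝ)⁻¹ ^ (l[i]).2 := by
          rw [htake, costOf_append]
          simp [costOf]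
        have := costOf_nonneg (l.take i)
        have h2 := hcost
        rw [hsplitcost, h1] at h2
        have := costOf_nonneg (l.drop j₀)
        linarith
      have helem : (l[i]).1 ∈ V (n+1) := by
        have h2 : n < (l[i]).2 :=
          (pow_lt_pow_iff_right_of_lt_one₀ (by norm_num) (by norm_num)).mp helemcost
        exact hmono' h2 (hmem _ (List.getElem_mem hilt))
      have hsufcost : costOf (l.drop j₀) < (2:ℝ)⁻¹ ^ (n+1) := by
        have hps : (2:ℝ)⁻¹ ^ (n+1) = (2:ℝ)⁻¹ ^ n * 2⁻¹ := pow_succ _ _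
        rw [hsplitcost] at hcost
        nlinarith [hspec, hcost]
      have hpreflen : (l.take i).length ≤ N := by
        simp only [List.length_take]
        omega
      have hsuflen : (l.drop j₀).length ≤ N := by
        simp only [List.length_drop]
        omega
      have ha : valOf (l.take i) ∈ V (n+1) :=
        ih _ hpreflen (n+1) (fun q hq => hmem q (List.take_subset _ _ hq)) hprefcost
      have hc : valOf (l.drop j₀) ∈ V (n+1) :=
        ih _ hsuflen (n+1) (fun q hq => hmem q (List.drop_subset _ _ hq)) hsufcost
      have hval : valOf l = valOf (l.take i) + (l[i]).1 + valOf (l.drop j₀) := by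
        conv_lhs => rw [← List.take_append_drop j₀ l]
        rw [valOf_append, htake, valOf_append]
        simp [valOf, add_assoc]
      rw [hval]
      exact htriple n _ _ _ ha helem hc

end MME

namespace MME2

open MME

set_option linter.unusedSectionVars false

variable {E : Type} [AddCommGroup E] [TopologicalSpace E] [IsTopologicalAddGroup E]

def costSet (V : ℕ → Set E) (x : E) : Set ℝ :=
  {c | ∃ l : List (E × ℕ), (∀ p ∈ l, p.1 ∈ V p.2) ∧ costOf l = c ∧ valOf l = x}

noncomputable def bk (V : ℕ → Set E) (x : E) : ℝ := sInf (costSet V x)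

lemma costSet_nonempty (V : ℕ → Set E) (hV0 : V 0 = Set.univ) (x : E) :
    (costSet V x).Nonempty := by
  refine ⟨1, [(x, 0)], ?_, ?_, ?_⟩ <;> simp [costOf, valOf, hV0]

lemma costSet_bddBelow (V : ℕ → Set E) (x : E) : BddBelow (costSet V x) := by
  refine ⟨0, fun c hc => ?_⟩
  obtain ⟨l, -, rfl, -⟩ := hc
  exact costOf_nonneg l

lemma bk_nonneg (V : ℕ → Set E) (x : E) : 0 ≤ bk V x :=
  Real.sInf_nonneg (fun c hc => by obtain ⟨l, -, rfl, -⟩ := hc; exact costOf_nonneg l)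

end MME2

namespace MME3
open MME MME2
set_option linter.unusedSectionVars false

variable {E : Type} [AddCommGroup E] [TopologicalSpace E] [IsTopologicalAddGroup E]

lemma bk_le_of_mem (V : ℕ → Set E) {x : E} {n : ℕ} (hx : x ∈ V n) :
    bk V x ≤ (2:ℝ)⁻¹ ^ n := by
  apply csInf_le (costSet_bddBelow V x)
  exact ⟨[(x, n)], by simpa [costOf, valOf] using hx⟩

lemma bk_zero (V : ℕ → Set E) : bk V (0 : E) = 0 := by
  refine le_antisymm ?_ (bk_nonneg V 0)
  apply csInf_le (costSet_bddBelow V 0)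
  exact ⟨[], by simp [costOf, valOf]⟩

lemma bk_lt_imp_mem (V : ℕ → Set E) (h0 : ∀ n, (0:E) ∈ V n)
    (hmono : ∀ n, V (n+1) ⊆ V n)
    (htriple : ∀ n a b c, a ∈ V (n+1) → b ∈ V (n+1) → c ∈ V (n+1) → a + b + c ∈ V n)
    (hV0 : V 0 = Set.univ) {x : E} {n : ℕ} (h : bk V x < (2:ℝ)⁻¹ ^ n) : x ∈ V n := by
  obtain ⟨c, hc, hlt⟩ :=
    (csInf_lt_iff (costSet_bddBelow V x) (costSet_nonempty V hV0 x)).mp h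
  obtain ⟨l, hmem, rfl, rfl⟩ := hc
  exact chain_aux V h0 hmono htriple l.length l le_rfl n hmem hlt

lemma bk_add_le (V : ℕ → Set E) (hV0 : V 0 = Set.univ) (x y : E) :
    bk V (x + y) ≤ bk V x + bk V y := by
  refine le_of_forall_pos_le_add (fun ε hε => ?_)
  obtain ⟨c, hc, hclt⟩ := (csInf_lt_iff (costSet_bddBelow V x) (costSet_nonempty V hV0 x)).mp
    (show bk V x < bk V x + ε/2 by linarith)
  obtain ⟨d, hd, hdlt⟩ := (csInf_lt_iff (costSet_bddBelow V y) (costSet_nonempty V hV0 y)).mp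
    (show bk V y < bk V y + ε/2 by linarith)
  obtain ⟨l, hlm, rfl, rfl⟩ := hc
  obtain ⟨m, hmm, rfl, rfl⟩ := hd
  have : costOf (l ++ m) ∈ costSet V (valOf l + valOf m) := by
    refine ⟨l ++ m, ?_, rfl, valOf_append l m⟩
    intro p hp
    rcases List.mem_append.mp hp with h | h
    · exact hlm p h
    · exact hmm p h
  have h2 := csInf_le (costSet_bddBelow V _) this
  rw [costOf_append] at h2
  calc bk V (valOf l + valOf m) ≤ costOf l + costOf m := h2
    _ ≤ bk V (valOf l) + bk V (valOf m) + ε := by linarith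

lemma costOf_negList (l : List (E × ℕ)) :
    costOf (l.map fun p => (-p.1, p.2)) = costOf l := by
  simp only [costOf, List.map_map]
  rfl

lemma valOf_negList (l : List (E × ℕ)) :
    valOf (l.map fun p => (-p.1, p.2)) = - valOf l := by
  induction l with
  | nil => simp [valOf]
  | cons a t ih =>
    simp only [List.map_cons, valOf, List.sum_cons] at *
    rw [ih]
    abel

lemma bk_neg (V : ℕ → Set E) (hV0 : V 0 = Set.univ) (hsym : ∀ n, ∀ x ∈ V n, -x ∈ V n) (x : E) :
    bk V (-x) = bk V x := by
  have key : ∀ z : E, bk V (-z) ≤ bk V z := by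
    intro z
    refine le_csInf (costSet_nonempty V hV0 z) (fun c hc => ?_)
    obtain ⟨l, hlm, rfl, rfl⟩ := hc
    apply csInf_le (costSet_bddBelow V _)
    exact ⟨l.map fun p => (-p.1, p.2),
      fun p hp => by
        obtain ⟨q, hq, rfl⟩ := List.mem_map.mp hp
        exact hsym _ _ (hlm q hq),
      costOf_negList l, valOf_negList l⟩
  have h1 := key x
  have h2 := key (-x)
  rw [neg_neg] at h2
  exact le_antisymm h1 h2

end MME3

namespace MME4
open MME MME2 MME3 Filter Set Topology
set_option linter.unusedSectionVars false

variable {E : Type} [AddCommGroup E] [TopologicalSpace E] [IsTopologicalAddGroup E]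

lemma key_nhds {U : Set E} (hU : U ∈ 𝓝 (0:E)) :
    ∃ S : Set E, S ∈ 𝓝 (0:E) ∧ (∀ x ∈ S, -x ∈ S) ∧
      ∀ a b c : E, a ∈ S → b ∈ S → c ∈ S → a + b + c ∈ U := by
  obtain ⟨V₁, hV₁, h1⟩ := exists_nhds_half_neg hU
  obtain ⟨V₂, hV₂, h2⟩ := exists_nhds_half_neg hV₁
  set T := V₂ ∩ V₁ with hT
  have hTmem : T ∈ 𝓝 (0:E) := inter_mem hV₂ hV₁
  have hnegT : (fun x : E => -x) ⁻¹' T ∈ 𝓝 (0:E) := by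
    have : Filter.Tendsto (fun x : E => -x) (𝓝 0) (𝓝 0) := by
      simpa using (continuous_neg : Continuous fun x : E => -x).tendsto (0:E)
    exact this hTmem
  refine ⟨T ∩ ((fun x : E => -x) ⁻¹' T), inter_mem hTmem hnegT, ?_, ?_⟩
  · rintro x ⟨hx1, hx2⟩
    exact ⟨hx2, by simpa using hx1⟩
  · rintro a b c ⟨ha1, -⟩ ⟨-, hb2⟩ ⟨-, hc2⟩
    have hab : a + b ∈ V₁ := by
      have := h2 a ha1.1 (-b) (by simpa using hb2.1)
      simpa [sub_neg_eq_add] using this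
    have := h1 (a+b) hab (-c) (by simpa using hc2.2)
    simpa [sub_neg_eq_add] using this

lemma exists_V [TopologicalSpace.MetrizableSpace E] :
    ∃ V : ℕ → Set E, V 0 = Set.univ ∧ (∀ n, V n ∈ 𝓝 (0:E)) ∧
      (∀ n, ∀ x ∈ V n, -x ∈ V n) ∧ (∀ n, V (n+1) ⊆ V n) ∧
      (∀ n a b c, a ∈ V (n+1) → b ∈ V (n+1) → c ∈ V (n+1) → a + b + c ∈ V n) ∧
      (∀ U ∈ 𝓝 (0:E), ∃ n, V n ⊆ U) := by
  obtain ⟨bb, hb⟩ := (𝓝 (0:E)).exists_antitone_basis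
  choose nextS hmem hsym htrip using fun (U : Set E) (hU : U ∈ 𝓝 (0:E)) => key_nhds hU
  let seq : ℕ → {S : Set E // S ∈ 𝓝 (0:E)} := fun n => Nat.rec
    ⟨Set.univ, univ_mem⟩
    (fun n prev => ⟨nextS (prev.1 ∩ bb (n+1))
      (inter_mem prev.2 (hb.toHasBasis.mem_of_mem trivial)),
      hmem _ _⟩) n
  set V : ℕ → Set E := fun n => (seq n).1 with hV
  have hVs : ∀ n, V (n+1) = nextS ((V n) ∩ bb (n+1))
      (inter_mem (seq n).2 (hb.toHasBasis.mem_of_mem trivial)) := fun n => rfl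
  have hmemV : ∀ n, V n ∈ 𝓝 (0:E) := fun n => (seq n).2
  have h0V : ∀ n, (0:E) ∈ V n := fun n => mem_of_mem_nhds (hmemV n)
  have hsymV : ∀ n, ∀ x ∈ V n, -x ∈ V n := by
    intro n
    cases n with
    | zero => intro x _; trivial
    | succ n => rw [hVs n]; exact hsym _ _
  have htripV : ∀ n a b c, a ∈ V (n+1) → b ∈ V (n+1) → c ∈ V (n+1) →
      a + b + c ∈ V n ∩ bb (n+1) := by
    intro n a' b' c' ha hb' hc
    rw [hVs n] at ha hb' hc
    exact htrip _ _ a' b' c' ha hb' hc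
  have hsubV : ∀ n, V (n+1) ⊆ V n ∩ bb (n+1) := by
    intro n a ha
    have := htripV n a 0 0 ha (h0V (n+1)) (h0V (n+1))
    simpa using this
  refine ⟨V, rfl, hmemV, hsymV, fun n => (hsubV n).trans inter_subset_left,
    fun n a' b' c' ha hb' hc => (htripV n a' b' c' ha hb' hc).1, ?_⟩
  intro U hU
  obtain ⟨n, -, hn⟩ := hb.toHasBasis.mem_iff.mp hU
  exact ⟨n + 1, ((hsubV n).trans inter_subset_right).trans ((hb.antitone (Nat.le_succ n)).trans hn)⟩

end MME4

namespace MME5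
open MME MME2 MME3 MME4 Filter Set Topology
set_option linter.unusedSectionVars false

variable {E : Type} [AddCommGroup E] [TopologicalSpace E] [IsTopologicalAddGroup E]

lemma exists_goodF [TopologicalSpace.MetrizableSpace E] :
    ∃ (F : E → ℝ) (V : ℕ → Set E),
      (∀ x, 0 ≤ F x) ∧ F 0 = 0 ∧
      (∀ x y, F (x + y) ≤ F x + F y) ∧
      (∀ x, F (-x) = F x) ∧
      (∀ n x, x ∈ V n → F x ≤ (2:ℝ)⁻¹ ^ n) ∧
      (∀ n x, F x < (2:ℝ)⁻¹ ^ n → x ∈ V n) ∧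
      (∀ n, V n ∈ 𝓝 (0:E)) ∧
      (∀ U ∈ 𝓝 (0:E), ∃ n, V n ⊆ U) ∧
      (∀ x, F x = 0 → x = 0) := by
  obtain ⟨V, hV0, hmem, hsym, hmono, htrip, hbasis⟩ := exists_V (E := E)
  have h0V : ∀ n, (0:E) ∈ V n := fun n => mem_of_mem_nhds (hmem n)
  have hlow : ∀ n (x : E), bk V x < (2:ℝ)⁻¹ ^ n → x ∈ V n :=
    fun n x h => bk_lt_imp_mem V h0V hmono htrip hV0 h
  refine ⟨bk V, V, bk_nonneg V, bk_zero V, bk_add_le V hV0, bk_neg V hV0 hsym,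
    fun n x hx => bk_le_of_mem V hx, hlow, hmem, hbasis, ?_⟩
  intro x hx
  by_contra hne
  have hne' : (0:E) ≠ x := fun h => hne h.symm
  obtain ⟨n, hn⟩ := hbasis {x}ᶜ (compl_singleton_mem_nhds hne')
  exact hn (hlow n x (by rw [hx]; positivity)) rfl

end MME5

namespace MMEB
open Filter Set Topology
set_option linter.unusedSectionVars false

def nn : ℕ → ℕ
  | 0 => 1
  | (k+1) => 2^(k+2) * nn k

lemma nn_pos : ∀ k, 0 < nn k
  | 0 => Nat.one_pos
  | (k+1) => Nat.mul_pos (Nat.pow_pos (by norm_num)) (nn_pos k)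

lemma nn_ge : ∀ k, 2^k ≤ nn k
  | 0 => le_rfl
  | (k+1) => by
    have h1 := nn_ge k
    have := nn_pos k
    calc 2^(k+1) = 2 * 2^k := by ring
      _ ≤ 2^(k+2) * nn k := by
          have h2 : (2:ℕ) ≤ 2^(k+2) := by
            calc (2:ℕ) = 2^1 := rfl
              _ ≤ 2^(k+2) := Nat.pow_le_pow_right (by norm_num) (by omega)
          exact Nat.mul_le_mul h2 h1
      _ = nn (k+1) := rfl

lemma nn_mono : Monotone nn := by
  apply monotone_nat_of_le_succ
  intro k
  have := nn_pos k
  calc nn k = 1 * nn k := (one_mul _).symm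
    _ ≤ 2^(k+2) * nn k := Nat.mul_le_mul (Nat.one_le_two_pow) le_rfl
    _ = nn (k+1) := rfl

lemma nnsum : ∀ K, 2 * ∑ k ∈ Finset.range K, 2^k * nn k ≤ nn K
  | 0 => by simp [nn]
  | (K+1) => by
    have ih := nnsum K
    rw [Finset.sum_range_succ]
    have h1 : 2 * (∑ k ∈ Finset.range K, 2^k * nn k) + 2 * (2^K * nn K) ≤
        nn K + 2^(K+1) * nn K := by
      have : 2 * (2^K * nn K) = 2^(K+1) * nn K := by ring
      omega
    have h2 : nn K + 2^(K+1) * nn K ≤ 2^(K+2) * nn K := by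
      have hp : (1:ℕ) + 2^(K+1) ≤ 2^(K+2) := by
        have : (2:ℕ)^(K+1) + 2^(K+1) = 2^(K+2) := by ring
        have h1 : (1:ℕ) ≤ 2^(K+1) := Nat.one_le_two_pow
        omega
      calc nn K + 2^(K+1) * nn K = (1 + 2^(K+1)) * nn K := by ring
        _ ≤ 2^(K+2) * nn K := Nat.mul_le_mul hp le_rfl
    calc 2 * (∑ k ∈ Finset.range K, 2^k * nn k + 2^K * nn K)
        = 2 * (∑ k ∈ Finset.range K, 2^k * nn k) + 2 * (2^K * nn K) := by ring
      _ ≤ nn K + 2^(K+1) * nn K := h1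
      _ ≤ 2^(K+2) * nn K := h2
      _ = nn (K+1) := rfl

noncomputable def Cc (c : ℕ →₀ ℤ) : ℝ := c.sum fun k m => |(m:ℝ)| * (2:ℝ)⁻¹ ^ k

def Zs (c : ℕ →₀ ℤ) : ℤ := c.sum fun k m => m * (nn k : ℤ)

lemma Cc_nonneg (c : ℕ →₀ ℤ) : 0 ≤ Cc c := by
  rw [Cc, Finsupp.sum]
  exact Finset.sum_nonneg (fun k _ => by positivity)

lemma term_le_Cc (c : ℕ →₀ ℤ) {k : ℕ} (hk : k ∈ c.support) :
    |((c k : ℤ) : ℝ)| * (2:ℝ)⁻¹ ^ k ≤ Cc c := by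
  apply Finset.single_le_sum (f := fun k => |((c k : ℤ):ℝ)| * (2:ℝ)⁻¹ ^ k)
    (fun i _ => by positivity) hk

lemma abs_le_of_Cc {c : ℕ →₀ ℤ} (h : Cc c ≤ 1) {k : ℕ} (hk : k ∈ c.support) :
    |c k| ≤ 2^k := by
  have h1 := (term_le_Cc c hk).trans h
  have h2 : ((2:ℝ)⁻¹)^k = ((2:ℝ)^k)⁻¹ := by rw [inv_pow]
  rw [h2] at h1
  have hp : (0:ℝ) < (2:ℝ)^k := by positivity
  rw [mul_inv_le_iff₀ hp, one_mul] at h1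
  have : ((|c k| : ℤ) : ℝ) ≤ (((2:ℤ)^k : ℤ) : ℝ) := by push_cast; push_cast at h1; linarith
  exact_mod_cast this

lemma lacunary {c : ℕ →₀ ℤ} (hc : Cc c ≤ 1) (hne : c ≠ 0) :
    (nn (c.support.max' (Finsupp.support_nonempty_iff.mpr hne)) : ℤ) ≤ 2 * |Zs c| := by
  set K := c.support.max' (Finsupp.support_nonempty_iff.mpr hne) with hK
  have hKmem : K ∈ c.support := Finset.max'_mem _ _
  have hsplit : ∑ k ∈ c.support.erase K, (c k) * (nn k : ℤ) + (c K) * (nn K : ℤ) = Zs c := by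
    rw [Zs, Finsupp.sum]
    exact Finset.sum_erase_add _ _ hKmem
  have hsub : c.support.erase K ⊆ Finset.range K := by
    intro k hk
    have h1 := Finset.mem_of_mem_erase hk
    have h2 := Finset.ne_of_mem_erase hk
    have := Finset.le_max' c.support k h1
    rw [Finset.mem_range]
    omega
  have hbound : |∑ k ∈ c.support.erase K, (c k) * (nn k : ℤ)| ≤
      ∑ k ∈ Finset.range K, (2^k * nn k : ℤ) := by
    calc |∑ k ∈ c.support.erase K, (c k) * (nn k : ℤ)|
        ≤ ∑ k ∈ c.support.erase K, |(c k) * (nn k : ℤ)| := Finset.abs_sum_le_sum_abs _ _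
      _ ≤ ∑ k ∈ c.support.erase K, (2^k * nn k : ℤ) := by
          apply Finset.sum_le_sum
          intro k hk
          rw [abs_mul]
          have h1 : |c k| ≤ 2^k := abs_le_of_Cc hc (Finset.mem_of_mem_erase hk)
          have h2 : |(nn k : ℤ)| = (nn k : ℤ) := abs_of_nonneg (by positivity)
          rw [h2]
          exact mul_le_mul_of_nonneg_right h1 (by positivity)
      _ ≤ ∑ k ∈ Finset.range K, (2^k * nn k : ℤ) := by
          apply Finset.sum_le_sum_of_subset_of_nonneg hsub
          intro k _ _
          positivity
  have hA : 2 * ∑ k ∈ Finset.range K, (2^k * nn k : ℤ) ≤ (nn K : ℤ) := by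
    have := nnsum K
    have hcast : ((2 * ∑ k ∈ Finset.range K, 2^k * nn k : ℕ) : ℤ) ≤ ((nn K : ℕ) : ℤ) :=
      Int.ofNat_le.mpr this
    push_cast at hcast
    convert hcast using 2
  have hcK : 1 ≤ |c K| := Int.one_le_abs (Finsupp.mem_support_iff.mp hKmem)
  have h1 : (nn K : ℤ) ≤ |c K * (nn K : ℤ)| := by
    rw [abs_mul, abs_of_nonneg (show (0:ℤ) ≤ (nn K : ℤ) by positivity)]
    nlinarith [nn_pos K]
  have h2 : |c K * (nn K : ℤ)| - |∑ k ∈ c.support.erase K, (c k) * (nn k : ℤ)| ≤ |Zs c| := by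
    rw [← hsplit]
    have := abs_add_le (∑ k ∈ c.support.erase K, (c k) * (nn k : ℤ)) ((c K) * (nn K : ℤ))
    have h3 := abs_sub_abs_le_abs_sub ((c K) * (nn K : ℤ))
      (-(∑ k ∈ c.support.erase K, (c k) * (nn k : ℤ)))
    simp only [abs_neg, sub_neg_eq_add] at h3
    calc |c K * (nn K:ℤ)| - |∑ k ∈ c.support.erase K, c k * (nn k:ℤ)|
        ≤ |c K * (nn K:ℤ) + ∑ k ∈ c.support.erase K, c k * (nn k:ℤ)| := h3
      _ = |∑ k ∈ c.support.erase K, c k * (nn k:ℤ) + c K * (nn K:ℤ)| := by rw [add_comm]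
  linarith

lemma zero_of_Zs {c : ℕ →₀ ℤ} (hc : Cc c ≤ 1) (hz : Zs c = 0) : c = 0 := by
  by_contra hne
  have := lacunary hc hne
  rw [hz] at this
  simp only [abs_zero, mul_zero] at this
  have := nn_pos (c.support.max' (Finsupp.support_nonempty_iff.mpr hne))
  omega

end MMEB

namespace MMEC
open MMEB Filter Set Topology
set_option linter.unusedSectionVars false

variable {E : Type} [AddCommGroup E]

def Es (dd : ℕ → E) (c : ℕ →₀ ℤ) : E := c.sum fun k m => m • dd k

lemma Es_add (dd : ℕ → E) (c c' : ℕ →₀ ℤ) : Es dd (c + c') = Es dd c + Es dd c' :=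
  Finsupp.sum_add_index' (fun k => zero_smul ℤ (dd k)) (fun k m m' => add_smul m m' (dd k))

lemma Zs_add (c c' : ℕ →₀ ℤ) : Zs (c + c') = Zs c + Zs c' :=
  Finsupp.sum_add_index' (fun k => zero_mul _) (fun k m m' => add_mul m m' _)

lemma Es_neg (dd : ℕ → E) (c : ℕ →₀ ℤ) : Es dd (-c) = - Es dd c := by
  rw [Es, Finsupp.sum_neg_index (fun k => zero_smul ℤ (dd k))]
  rw [Es, Finsupp.sum, Finsupp.sum, ← Finset.sum_neg_distrib]
  apply Finset.sum_congr rfl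
  intro k _
  rw [neg_smul]

lemma Zs_neg (c : ℕ →₀ ℤ) : Zs (-c) = - Zs c := by
  rw [Zs, Finsupp.sum_neg_index (fun k => zero_mul ((nn k : ℤ)))]
  rw [Zs, Finsupp.sum, Finsupp.sum, ← Finset.sum_neg_distrib]
  apply Finset.sum_congr rfl
  intro k _
  rw [neg_mul]

lemma Cc_neg (c : ℕ →₀ ℤ) : Cc (-c) = Cc c := by
  rw [Cc, Finsupp.sum_neg_index (fun k => by simp)]
  rw [Cc, Finsupp.sum, Finsupp.sum]
  apply Finset.sum_congr rfl
  intro k _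
  push_cast
  rw [abs_neg]

lemma Es_single (dd : ℕ → E) (k : ℕ) : Es dd (Finsupp.single k 1) = dd k := by
  rw [Es, Finsupp.sum_single_index (zero_smul ℤ (dd k))]
  exact one_zsmul _

lemma Zs_single (k : ℕ) : Zs (Finsupp.single k 1) = (nn k : ℤ) := by
  rw [Zs, Finsupp.sum_single_index (zero_mul ((nn k : ℤ))), one_mul]

lemma Cc_single (k : ℕ) : Cc (Finsupp.single k 1) = (2:ℝ)⁻¹ ^ k := by
  rw [Cc, Finsupp.sum_single_index (by simp)]
  simp

lemma Zs_single0 (m : ℤ) : Zs (Finsupp.single 0 m) = m := by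
  rw [Zs, Finsupp.sum_single_index (zero_mul ((nn 0 : ℤ)))]
  simp [nn]

lemma Es_zero (dd : ℕ → E) : Es dd 0 = 0 := Finsupp.sum_zero_index

lemma Zs_zero : Zs 0 = 0 := Finsupp.sum_zero_index

lemma Cc_zero : Cc 0 = 0 := Finsupp.sum_zero_index

lemma Cc_add_le (c c' : ℕ →₀ ℤ) : Cc (c + c') ≤ Cc c + Cc c' := by
  classical
  set s := c.support ∪ c'.support with hs
  have h1 : (c + c').support ⊆ s := Finsupp.support_add
  have e1 : Cc (c + c') = ∑ k ∈ s, |((c + c') k : ℝ)| * (2:ℝ)⁻¹ ^ k :=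
    Finsupp.sum_of_support_subset _ h1 _ (fun i _ => by simp)
  have e2 : Cc c = ∑ k ∈ s, |((c k : ℤ) : ℝ)| * (2:ℝ)⁻¹ ^ k :=
    Finsupp.sum_of_support_subset _ Finset.subset_union_left _ (fun i _ => by simp)
  have e3 : Cc c' = ∑ k ∈ s, |((c' k : ℤ) : ℝ)| * (2:ℝ)⁻¹ ^ k :=
    Finsupp.sum_of_support_subset _ Finset.subset_union_right _ (fun i _ => by simp)
  rw [e1, e2, e3, ← Finset.sum_add_distrib]
  apply Finset.sum_le_sum
  intro k _
  have : |((c + c') k : ℝ)| ≤ |((c k : ℤ) : ℝ)| + |((c' k : ℤ) : ℝ)| := by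
    push_cast
    exact_mod_cast abs_add_le (c k : ℝ) (c' k : ℝ)
  nlinarith [this, pow_nonneg (by norm_num : (0:ℝ) ≤ 2⁻¹) k]

def decSet (dd : ℕ → E) (F : E → ℝ) (h : E × ℤ) : Set ℝ :=
  {r | ∃ c : ℕ →₀ ℤ, Zs c = h.2 ∧ r = F (h.1 + Es dd c) + Cc c}

noncomputable def NN (dd : ℕ → E) (F : E → ℝ) (h : E × ℤ) : ℝ := sInf (decSet dd F h)

lemma decSet_nonempty (dd : ℕ → E) (F : E → ℝ) (h : E × ℤ) : (decSet dd F h).Nonempty :=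
  ⟨_, Finsupp.single 0 h.2, Zs_single0 h.2, rfl⟩

lemma decSet_bddBelow (dd : ℕ → E) (F : E → ℝ) (hF0 : ∀ x, 0 ≤ F x) (h : E × ℤ) :
    BddBelow (decSet dd F h) := by
  refine ⟨0, fun r hr => ?_⟩
  obtain ⟨c, -, rfl⟩ := hr
  have := hF0 (h.1 + Es dd c)
  have := Cc_nonneg c
  linarith

lemma NN_nonneg (dd : ℕ → E) (F : E → ℝ) (hF0 : ∀ x, 0 ≤ F x) (h : E × ℤ) :
    0 ≤ NN dd F h :=
  le_csInf (decSet_nonempty dd F h) (fun r hr => by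
    obtain ⟨c, -, rfl⟩ := hr
    have := hF0 (h.1 + Es dd c)
    have := Cc_nonneg c
    linarith)

lemma NN_le (dd : ℕ → E) (F : E → ℝ) (hF0 : ∀ x, 0 ≤ F x) (h : E × ℤ) (c : ℕ →₀ ℤ)
    (hc : Zs c = h.2) : NN dd F h ≤ F (h.1 + Es dd c) + Cc c :=
  csInf_le (decSet_bddBelow dd F hF0 h) ⟨c, hc, rfl⟩

lemma NN_le_F (dd : ℕ → E) (F : E → ℝ) (hF0 : ∀ x, 0 ≤ F x) (x : E) :
    NN dd F (x, 0) ≤ F x := by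
  have := NN_le dd F hF0 (x, 0) 0 Zs_zero
  simpa [Es_zero, Cc_zero] using this

lemma NN_add_le (dd : ℕ → E) (F : E → ℝ) (hF0 : ∀ x, 0 ≤ F x)
    (hFadd : ∀ x y, F (x + y) ≤ F x + F y) (h g : E × ℤ) :
    NN dd F (h + g) ≤ NN dd F h + NN dd F g := by
  refine le_of_forall_pos_le_add (fun ε hε => ?_)
  obtain ⟨r, hr, hrlt⟩ := (csInf_lt_iff (decSet_bddBelow dd F hF0 h)
    (decSet_nonempty dd F h)).mp (show NN dd F h < NN dd F h + ε/2 by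
      have := NN_nonneg dd F hF0 h; linarith)
  obtain ⟨r', hr', hrlt'⟩ := (csInf_lt_iff (decSet_bddBelow dd F hF0 g)
    (decSet_nonempty dd F g)).mp (show NN dd F g < NN dd F g + ε/2 by
      have := NN_nonneg dd F hF0 g; linarith)
  obtain ⟨c, hc, rfl⟩ := hr
  obtain ⟨c', hc', rfl⟩ := hr'
  have hZ : Zs (c + c') = (h + g).2 := by rw [Zs_add, hc, hc']; rfl
  have h1 := NN_le dd F hF0 (h + g) (c + c') hZ
  have h2 : F ((h + g).1 + Es dd (c + c')) ≤
      F (h.1 + Es dd c) + F (g.1 + Es dd c') := by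
    have : (h + g).1 + Es dd (c + c') = (h.1 + Es dd c) + (g.1 + Es dd c') := by
      rw [Es_add]
      show h.1 + g.1 + _ = _
      abel
    rw [this]
    exact hFadd _ _
  have h3 := Cc_add_le c c'
  linarith

lemma NN_neg (dd : ℕ → E) (F : E → ℝ) (hF0 : ∀ x, 0 ≤ F x)
    (hFneg : ∀ x, F (-x) = F x) (h : E × ℤ) :
    NN dd F (-h) = NN dd F h := by
  have key : ∀ g : E × ℤ, NN dd F (-g) ≤ NN dd F g := by
    intro g
    refine le_csInf (decSet_nonempty dd F g) (fun r hr => ?_)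
    obtain ⟨c, hc, rfl⟩ := hr
    have hZ : Zs (-c) = (-g).2 := by rw [Zs_neg, hc]; rfl
    have h1 := NN_le dd F hF0 (-g) (-c) hZ
    have h2 : F ((-g).1 + Es dd (-c)) = F (g.1 + Es dd c) := by
      rw [Es_neg]
      show F (-g.1 + - Es dd c) = _
      rw [← neg_add, hFneg]
    rw [h2, Cc_neg] at h1
    exact h1
  have h1 := key h
  have h2 := key (-h)
  rw [neg_neg] at h2
  exact le_antisymm h1 h2

lemma NN_lt_imp (dd : ℕ → E) (F : E → ℝ) (hF0 : ∀ x, 0 ≤ F x) {z : E} {n : ℕ}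
    (h : NN dd F (z, (0:ℤ)) < (2:ℝ)⁻¹ ^ n) : F z < (2:ℝ)⁻¹ ^ n := by
  obtain ⟨r, hr, hrlt⟩ := (csInf_lt_iff (decSet_bddBelow dd F hF0 _)
    (decSet_nonempty dd F _)).mp h
  obtain ⟨c, hc, rfl⟩ := hr
  have hCc1 : Cc c ≤ 1 := by
    have h1 : (2:ℝ)⁻¹ ^ n ≤ 1 := by
      apply pow_le_one₀ <;> norm_num
    have := hF0 (z + Es dd c)
    linarith
  have hc0 : c = 0 := zero_of_Zs hCc1 hc
  subst hc0
  rw [Es_zero, Cc_zero] at hrlt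
  simpa using hrlt

lemma NN_pos (dd : ℕ → E) (F : E → ℝ) (hF0 : ∀ x, 0 ≤ F x) {z : E} {m : ℤ}
    (hm : m ≠ 0) (h : NN dd F (z, m) = 0) : False := by
  obtain ⟨K, hK⟩ : ∃ K, 2 * |m| < (nn K : ℤ) := by
    refine ⟨2 * m.natAbs + 1, ?_⟩
    have h1 : (2 * m.natAbs + 1 : ℕ) < 2 ^ (2 * m.natAbs + 1) := Nat.lt_two_pow_self
    have h2 := nn_ge (2 * m.natAbs + 1)
    have h3 : (2 * m.natAbs + 1 : ℕ) < nn (2 * m.natAbs + 1) := lt_of_lt_of_le h1 h2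
    have h4 : 2 * |m| < (2 * m.natAbs + 1 : ℕ) := by
      rw [Int.abs_eq_natAbs]
      push_cast
      omega
    exact lt_of_lt_of_le h4 (by exact_mod_cast h3.le)
  have hpos : (0:ℝ) < min 1 ((2:ℝ)⁻¹ ^ K) := by positivity
  obtain ⟨r, hr, hrlt⟩ := (csInf_lt_iff (decSet_bddBelow dd F hF0 _)
    (decSet_nonempty dd F _)).mp (show NN dd F (z, m) < min 1 ((2:ℝ)⁻¹ ^ K) by
      rw [h]; exact hpos)
  obtain ⟨c, hc, rfl⟩ := hr
  have hCcr : Cc c ≤ F (z + Es dd c) + Cc c := by have := hF0 (z + Es dd c); linarith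
  have hCc1 : Cc c ≤ 1 := le_of_lt (lt_of_le_of_lt hCcr (lt_of_lt_of_le hrlt (min_le_left _ _)))
  have hCcK : Cc c < (2:ℝ)⁻¹ ^ K := lt_of_le_of_lt hCcr (lt_of_lt_of_le hrlt (min_le_right _ _))
  have hcne : c ≠ 0 := by
    intro h0
    rw [h0, Zs_zero] at hc
    exact hm hc.symm
  have hlac := lacunary hCc1 hcne
  set Kc := c.support.max' (Finsupp.support_nonempty_iff.mpr hcne) with hKc
  rw [hc] at hlac
  have hlac' : (nn Kc : ℤ) ≤ 2 * |m| := by simpa using hlac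
  clear hlac
  have hKcK : Kc < K := by
    by_contra hcon
    push_neg at hcon
    have := nn_mono hcon
    have : (nn K : ℤ) ≤ (nn Kc : ℤ) := by exact_mod_cast this
    omega
  have hterm : (2:ℝ)⁻¹ ^ Kc ≤ Cc c := by
    have hmem : Kc ∈ c.support := Finset.max'_mem _ _
    have h1 := term_le_Cc c hmem
    have h2 : (1:ℝ) ≤ |((c Kc : ℤ) : ℝ)| := by
      have := Int.one_le_abs (Finsupp.mem_support_iff.mp hmem)
      have : ((1:ℤ):ℝ) ≤ ((|c Kc| : ℤ) : ℝ) := by exact_mod_cast this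
      simpa using this
    nlinarith [pow_nonneg (by norm_num : (0:ℝ) ≤ 2⁻¹) Kc]
  have hpow : (2:ℝ)⁻¹ ^ K < (2:ℝ)⁻¹ ^ Kc :=
    pow_lt_pow_right_of_lt_one₀ (by norm_num) (by norm_num) hKcK
  linarith

end MMEC


namespace MMED
open MMEB MMEC
set_option linter.unusedSectionVars false

variable {E : Type} [AddCommGroup E]

noncomputable def theMS (dd : ℕ → E) (F : E → ℝ) (hF0 : ∀ x, 0 ≤ F x) (hFzero : F 0 = 0)
    (hFadd : ∀ x y, F (x + y) ≤ F x + F y) (hFneg : ∀ x, F (-x) = F x)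
    (hFz : ∀ z : E, (∀ n : ℕ, F z < (2:ℝ)⁻¹ ^ n) → z = 0) : MetricSpace (E × ℤ) where
  dist h g := NN dd F (h - g)
  dist_self h := by
    show NN dd F (h - h) = 0
    have h1 : h - h = ((0:E), (0:ℤ)) := by rw [sub_self]; rfl
    rw [h1]
    refine le_antisymm ?_ (NN_nonneg dd F hF0 _)
    have := NN_le_F dd F hF0 (0:E)
    rw [hFzero] at this
    exact this
  dist_comm h g := by
    show NN dd F (h - g) = NN dd F (g - h)
    have hh : h - g = -(g - h) := by abel
    rw [hh, NN_neg dd F hF0 hFneg]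
  dist_triangle h g k := by
    show NN dd F (h - k) ≤ NN dd F (h - g) + NN dd F (g - k)
    have hh : h - k = (h - g) + (g - k) := by abel
    rw [hh]
    exact NN_add_le dd F hF0 hFadd _ _
  eq_of_dist_eq_zero := by
    intro h g hzero0
    have hzero : NN dd F (h - g) = 0 := hzero0
    rcases eq_or_ne (h.2 - g.2) 0 with hm | hm
    · have h1 : h - g = ((h - g).1, (0:ℤ)) := by
        rw [← hm]; rfl
      rw [h1] at hzero
      have h2 : ∀ n : ℕ, F (h - g).1 < (2:ℝ)⁻¹ ^ n := by
        intro n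
        apply NN_lt_imp dd F hF0
        rw [hzero]
        positivity
      have h3 : (h - g).1 = 0 := hFz _ h2
      have h4 : h.1 = g.1 := by
        have : h.1 - g.1 = 0 := h3
        exact sub_eq_zero.mp this
      have h5 : h.2 = g.2 := sub_eq_zero.mp hm
      exact Prod.ext h4 h5
    · exfalso
      have h1 : h - g = ((h - g).1, h.2 - g.2) := rfl
      rw [h1] at hzero
      exact NN_pos dd F hF0 hm hzero

end MMED

open MMEB MMEC MME5 MMED Filter Set Topology NNReal




/-- An embedding of the abelian topological group `G` into a metrizable
monothetic topological group: a monothetic metrizable topological abelian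
group `H` together with an injective continuous homomorphism `G →+ H` that is
open onto its image. -/
structure MetrizableMonotheticEmbedding (G : Type) [AddCommGroup G]
    [TopologicalSpace G] where
  H : Type
  [grp : AddCommGroup H]
  [top : TopologicalSpace H]
  topgrp : IsTopologicalAddGroup H
  metrizable : TopologicalSpace.MetrizableSpace H
  monothetic : ∃ y : H, Dense ((AddSubgroup.zmultiples y : AddSubgroup H) : Set H)
  f : G →+ H
  inj : Function.Injective f
  cont : Continuous f
  open_onto_image : ∀ U : Set G, IsOpen U →
    ∃ V : Set H, IsOpen V ∧ f '' U = V ∩ Set.range f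

/-- Every separable metrizable real topological vector space embeds, as a
topological group, into a metrizable monothetic topological group. -/
theorem separable_metrizable_tvs_embeds_into_metrizable_monothetic
    (E : Type) [AddCommGroup E] [Module ℝ E] [TopologicalSpace E]
    [IsTopologicalAddGroup E] [ContinuousSMul ℝ E]
    [TopologicalSpace.MetrizableSpace E] [TopologicalSpace.SeparableSpace E] :
    Nonempty (MetrizableMonotheticEmbedding E) := by
  classical
  obtain ⟨F, V, hF0, hFzero, hFadd, hFneg, hFle, hFlt, hVmem, hVbasis, hFeq0⟩ :=
    MME5.exists_goodF (E := E)
  haveI : Nonempty E := ⟨0⟩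
  set u : ℕ → E := TopologicalSpace.denseSeq E with hu
  have hud : DenseRange u := TopologicalSpace.denseRange_denseSeq E
  set dd : ℕ → E := fun k => u (Nat.unpair k).1 with hdd
  -- approximation property of the sequence dd
  have happrox : ∀ (x : E) (ε : ℝ), 0 < ε →
      ∃ k, F (dd k - x) < ε/2 ∧ (2:ℝ)⁻¹ ^ k < ε/2 := by
    intro x ε hε
    obtain ⟨n, hn⟩ : ∃ n, (2:ℝ)⁻¹ ^ n < ε/2 :=
      exists_pow_lt_of_lt_one (by linarith) (by norm_num)
    have hUmem : (fun w : E => w - x) ⁻¹' (V n) ∈ 𝓝 x := by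
      have ht : Filter.Tendsto (fun w : E => w - x) (𝓝 x) (𝓝 0) := by
        have := (continuous_id.sub (continuous_const (y := x))).tendsto x
        simpa [Pi.sub_def] using this
      exact ht (hVmem n)
    have hxcl : x ∈ closure (Set.range u) := hud x
    obtain ⟨y, hyU, i, rfl⟩ := mem_closure_iff_nhds.mp hxcl _ hUmem
    obtain ⟨m, hm⟩ : ∃ m, (2:ℝ)⁻¹ ^ m < ε/2 :=
      exists_pow_lt_of_lt_one (by linarith) (by norm_num)
    refine ⟨Nat.pair i m, ?_, ?_⟩
    · have hdk : dd (Nat.pair i m) = u i := by rw [hdd]; simp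
      rw [hdk]
      exact lt_of_le_of_lt (hFle n _ hyU) hn
    · have hle : m ≤ Nat.pair i m := Nat.right_le_pair i m
      have := pow_le_pow_of_le_one (by norm_num : (0:ℝ) ≤ 2⁻¹) (by norm_num) hle
      linarith
  -- the metric space structure on E × ℤ
  have hFz_of : ∀ z : E, (∀ n : ℕ, F z < (2:ℝ)⁻¹ ^ n) → z = 0 := by
    intro z hz
    apply hFeq0
    refine le_antisymm ?_ (hF0 z)
    by_contra hpos
    push_neg at hpos
    obtain ⟨n, hn⟩ := exists_pow_lt_of_lt_one hpos (by norm_num : (2:ℝ)⁻¹ < 1)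
    exact absurd (hz n) (not_lt.mpr hn.le)
  letI ms : MetricSpace (E × ℤ) := MMED.theMS dd F hF0 hFzero hFadd hFneg hFz_of
  letI tops : TopologicalSpace (E × ℤ) := ms.toUniformSpace.toTopologicalSpace
  have hdist : ∀ h g : E × ℤ, dist h g = NN dd F (h - g) := fun _ _ => rfl
  -- continuity of addition and negation
  have hlip : LipschitzWith 2 (fun p : (E × ℤ) × (E × ℤ) => p.1 + p.2) := by
    apply LipschitzWith.of_dist_le_mul
    intro p q
    have h1 : dist (p.1 + p.2) (q.1 + q.2) ≤ dist p.1 q.1 + dist p.2 q.2 := by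
      rw [hdist, hdist, hdist]
      have : p.1 + p.2 - (q.1 + q.2) = (p.1 - q.1) + (p.2 - q.2) := by abel
      rw [this]
      exact NN_add_le dd F hF0 hFadd _ _
    have h2 : dist p.1 q.1 ≤ dist p q := by rw [Prod.dist_eq]; exact le_max_left _ _
    have h3 : dist p.2 q.2 ≤ dist p q := by rw [Prod.dist_eq]; exact le_max_right _ _
    have h4 : ((2:ℝ≥0):ℝ) = 2 := by norm_num
    rw [h4]
    linarith
  have hnegiso : Isometry (fun p : E × ℤ => -p) := by
    apply Isometry.of_dist_eq
    intro a b
    rw [hdist, hdist]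
    have : -a - -b = -(a - b) := by abel
    rw [this, NN_neg dd F hF0 hFneg]
  have htopgrp : IsTopologicalAddGroup (E × ℤ) :=
    { continuous_add := hlip.continuous
      continuous_neg := hnegiso.continuous }
  -- continuity of the embedding
  have hcont : Continuous (fun x : E => ((x, (0:ℤ)) : E × ℤ)) := by
    refine continuous_iff_continuousAt.mpr (fun x₀ => ?_)
    refine Metric.tendsto_nhds.mpr ?_
    intro ε hε
    obtain ⟨n, hn⟩ : ∃ n, (2:ℝ)⁻¹ ^ n < ε :=
      exists_pow_lt_of_lt_one hε (by norm_num)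
    have hev : {x : E | x - x₀ ∈ V n} ∈ 𝓝 x₀ := by
      have ht : Filter.Tendsto (fun w : E => w - x₀) (𝓝 x₀) (𝓝 0) := by
        have := (continuous_id.sub (continuous_const (y := x₀))).tendsto x₀
        simpa [Pi.sub_def] using this
      exact ht (hVmem n)
    filter_upwards [hev] with x hx
    have h1 : dist ((x, (0:ℤ)) : E × ℤ) ((x₀, (0:ℤ)) : E × ℤ) = NN dd F (x - x₀, (0:ℤ)) := by
      rw [hdist]
      congr 1
    rw [h1]
    calc NN dd F (x - x₀, (0:ℤ)) ≤ F (x - x₀) := NN_le_F dd F hF0 _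
      _ ≤ (2:ℝ)⁻¹ ^ n := hFle n _ hx
      _ < ε := hn
  -- small NN at level zero forces membership in V n
  have hsmall : ∀ (z : E) (n : ℕ), NN dd F (z, (0:ℤ)) < (2:ℝ)⁻¹ ^ n → z ∈ V n :=
    fun z n h => hFlt n z (NN_lt_imp dd F hF0 h)
  -- density of the cyclic subgroup
  have hmono : ∃ y : E × ℤ,
      Dense ((AddSubgroup.zmultiples y : AddSubgroup (E × ℤ)) : Set (E × ℤ)) := by
    refine ⟨((0:E), (1:ℤ)), Metric.dense_iff.mpr ?_⟩
    rintro ⟨x, m⟩ r hr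
    obtain ⟨k, hk1, hk2⟩ := happrox x r hr
    set j : ℤ := m + (nn k : ℤ) with hj
    have hjy : j • (((0:E), (1:ℤ)) : E × ℤ) = ((0:E), j) := by
      refine Prod.ext ?_ ?_
      · simp
      · simp
    refine ⟨j • (((0:E), (1:ℤ)) : E × ℤ), ?_, ?_⟩
    · rw [Metric.mem_ball, hjy, hdist]
      have hsub : (((0:E), j) : E × ℤ) - (x, m) = (-x, (nn k : ℤ)) := by
        refine Prod.ext ?_ ?_
        · show (0:E) - x = -x
          rw [zero_sub]
        · show j - m = (nn k : ℤ)
          rw [hj]; ring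
      rw [hsub]
      have hb := NN_le dd F hF0 (-x, (nn k : ℤ)) (Finsupp.single k 1) (by
        rw [Zs_single])
      rw [Es_single, Cc_single] at hb
      have he : -x + dd k = dd k - x := by abel
      rw [he] at hb
      linarith
    · simp only [SetLike.mem_coe]
      exact AddSubgroup.zsmul_mem _ (AddSubgroup.mem_zmultiples _) j
  -- openness onto the image
  have hopen : ∀ U : Set E, IsOpen U →
      ∃ W : Set (E × ℤ), IsOpen W ∧
        (fun x : E => ((x, (0:ℤ)) : E × ℤ)) '' U =
          W ∩ Set.range (fun x : E => ((x, (0:ℤ)) : E × ℤ)) := by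
    intro U hU
    have hx : ∀ x ∈ U, ∃ n, ∀ w ∈ V n, w + x ∈ U := by
      intro x hxU
      have h1 : (fun w : E => w + x) ⁻¹' U ∈ 𝓝 (0:E) := by
        have ht : Filter.Tendsto (fun w : E => w + x) (𝓝 0) (𝓝 x) := by
          have := (continuous_id.add (continuous_const (y := x))).tendsto (0:E)
          simpa [Pi.add_def] using this
        exact ht (hU.mem_nhds hxU)
      obtain ⟨n, hn⟩ := hVbasis _ h1
      exact ⟨n, fun w hw => hn hw⟩
    choose nx hnx using hx
    refine ⟨⋃ (x : E) (hx : x ∈ U), Metric.ball ((x, (0:ℤ)) : E × ℤ) ((2:ℝ)⁻¹ ^ (nx x hx)),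
      isOpen_iUnion (fun x => isOpen_iUnion (fun hx => Metric.isOpen_ball)), ?_⟩
    ext h
    constructor
    · rintro ⟨a, haU, rfl⟩
      refine ⟨Set.mem_iUnion.mpr ⟨a, Set.mem_iUnion.mpr ⟨haU, ?_⟩⟩, ⟨a, rfl⟩⟩
      rw [Metric.mem_ball, dist_self]
      positivity
    · rintro ⟨hmem, a, rfl⟩
      obtain ⟨x, hxx⟩ := Set.mem_iUnion.mp hmem
      obtain ⟨hxU, hball⟩ := Set.mem_iUnion.mp hxx
      rw [Metric.mem_ball, hdist] at hball
      have hsub : ((a, (0:ℤ)) : E × ℤ) - (x, (0:ℤ)) = (a - x, (0:ℤ)) := by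
        refine Prod.ext rfl ?_
        show (0:ℤ) - 0 = 0
        ring
      rw [hsub] at hball
      have hmemV : a - x ∈ V (nx x hxU) := hsmall _ _ hball
      have haU : a ∈ U := by
        have := hnx x hxU _ hmemV
        simpa using this
      exact ⟨a, haU, rfl⟩
  -- assemble
  refine ⟨{ H := E × ℤ
            grp := inferInstance
            top := ms.toUniformSpace.toTopologicalSpace
            topgrp := htopgrp
            metrizable := @EMetricSpace.metrizableSpace (E × ℤ) ms.toEMetricSpace
            monothetic := hmono
            f := AddMonoidHom.inl E ℤ
            inj := fun a b hab => congrArg Prod.fst hab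
            cont := hcont
            open_onto_image := ?_ }⟩
  · intro U hU
    obtain ⟨W, hW1, hW2⟩ := hopen U hU
    exact ⟨W, hW1, hW2⟩
end

section
/- Let E be a real topological vector space whose topology is coarser than some separable metrizable vector topology on the same vector space. Then E embeds as a topological subgroup into a monothetic topological group. -/
/-- An embedding of the abelian topological group `G` into a monothetic
topological group: a monothetic topological abelian group `H` together with an
injective continuous homomorphism `G →+ H` that is open onto its image. -/
structure MonotheticEmbedding (G : Type) [AddCommGroup G]
    [TopologicalSpace G] where
  H : Type
  [grp : AddCommGroup H]
  [top : TopologicalSpace H]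
  topgrp : IsTopologicalAddGroup H
  monothetic : ∃ y : H, Dense ((AddSubgroup.zmultiples y : AddSubgroup H) : Set H)
  f : G →+ H
  inj : Function.Injective f
  cont : Continuous f
  open_onto_image : ∀ U : Set G, IsOpen U →
    ∃ V : Set H, IsOpen V ∧ f '' U = V ∩ Set.range f



open Finset Filter Set

namespace MonoEmbAux

/-- `s i = ∏_{j<i} (1+4^(j+1))`, auxiliary partial-sum sequence. -/
def s : ℕ → ℤ
  | 0 => 1
  | k+1 => s k + 4^(k+1) * s k

lemma s_pos : ∀ i, 0 < s i
  | 0 => one_pos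
  | k+1 => by have := s_pos k; have : (0:ℤ) < 4^(k+1) * s k := by positivity
              simp only [s]; linarith [s_pos k]

/-- A super-increasing base sequence. -/
def b (i : ℕ) : ℤ := 4^(i+1) * s i

lemma b_pos (i : ℕ) : 0 < b i := by have := s_pos i; unfold b; positivity

lemma s_eq (i : ℕ) : s i = 1 + ∑ j ∈ Finset.range i, b j := by
  induction i with
  | zero => simp [s]
  | succ k ih =>
    rw [Finset.sum_range_succ, ← add_assoc, ← ih]
    rfl

lemma key (I : ℕ) : ∑ j ∈ Finset.range I, (2*2^j) * b j < b I := by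
  have h1 : ∑ j ∈ Finset.range I, (2*2^j) * b j ≤ ∑ j ∈ Finset.range I, 2^I * b j := by
    refine Finset.sum_le_sum fun j hj => mul_le_mul_of_nonneg_right ?_ (b_pos j).le
    have : (2:ℤ)^(j+1) ≤ 2^I := pow_le_pow_right₀ (by norm_num) (Finset.mem_range.1 hj)
    calc (2:ℤ)*2^j = 2^(j+1) := by ring
    _ ≤ 2^I := this
  have h2 : ∑ j ∈ Finset.range I, 2^I * b j = 2^I * (s I - 1) := by
    rw [← Finset.mul_sum, s_eq I]; ring
  have h3 : (2:ℤ)^I * (s I - 1) < b I := by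
    have hs := s_pos I
    have hp2 : (0:ℤ) < 2^I := by positivity
    have hle : (2:ℤ)^I ≤ 4^(I+1) := by
      calc (2:ℤ)^I ≤ 4^I := pow_le_pow_left₀ (by norm_num) (by norm_num) I
      _ ≤ 4^(I+1) := pow_le_pow_right₀ (by norm_num) (Nat.le_succ I)
    have : (2:ℤ)^I * (s I - 1) < 2^I * s I := by nlinarith
    calc (2:ℤ)^I * (s I - 1) < 2^I * s I := this
    _ ≤ 4^(I+1) * s I := mul_le_mul_of_nonneg_right hle hs.le
    _ = b I := rfl
  omega

/-- The value of a coefficient (finitely supported) function. -/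
noncomputable def val : (ℕ →₀ ℤ) →+ ℤ := Finsupp.liftAddHom fun i => AddMonoidHom.mulRight (b i)

lemma val_apply (c : ℕ →₀ ℤ) : val c = c.sum fun i m => m * b i := rfl

lemma val_single (i : ℕ) (m : ℤ) : val (Finsupp.single i m) = m * b i := by
  simp [val, Finsupp.liftAddHom_apply_single]

lemma eq_zero_aux : ∀ (N : ℕ) (d : ℕ →₀ ℤ), (∀ i, |d i| ≤ 2*2^i) →
    (d.support ⊆ Finset.range N) → val d = 0 → d = 0 := by
  intro N
  induction N with
  | zero =>
    intro d _ hsupp _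
    exact Finsupp.support_eq_empty.mp (Finset.subset_empty.mp (by simpa using hsupp))
  | succ N ih =>
    intro d hbd hsupp hval
    have hval' : ∑ i ∈ Finset.range (N+1), d i * b i = 0 := by
      rw [val_apply] at hval
      rwa [Finsupp.sum_of_support_subset d hsupp (fun i m => m * b i) (fun i _ => zero_mul _)] at hval
    rw [Finset.sum_range_succ] at hval'
    have habs : |∑ i ∈ Finset.range N, d i * b i| < b N := by
      calc |∑ i ∈ Finset.range N, d i * b i| ≤ ∑ i ∈ Finset.range N, |d i * b i| :=
            Finset.abs_sum_le_sum_abs _ _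
      _ = ∑ i ∈ Finset.range N, |d i| * b i := by
            refine Finset.sum_congr rfl fun i _ => ?_
            rw [abs_mul, abs_of_pos (b_pos i)]
      _ ≤ ∑ i ∈ Finset.range N, (2*2^i) * b i :=
            Finset.sum_le_sum fun i _ => mul_le_mul_of_nonneg_right (hbd i) (b_pos i).le
      _ < b N := key N
    have hdN : d N = 0 := by
      have h1 : |d N * b N| < b N := by
        have : d N * b N = -∑ i ∈ Finset.range N, d i * b i := by linarith
        rw [this, abs_neg]; exact habs
      rw [abs_mul, abs_of_pos (b_pos N)] at h1
      have h2 : |d N| < 1 := by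
        by_contra h
        push_neg at h
        nlinarith [b_pos N]
      exact Int.abs_lt_one_iff.mp h2
    refine ih d hbd ?_ hval
    intro i hi
    have h1 := hsupp hi
    rw [Finset.mem_range] at h1 ⊢
    rcases Nat.lt_succ_iff_lt_or_eq.mp h1 with h | h
    · exact h
    · exact absurd (h ▸ hdN) (Finsupp.mem_support_iff.mp hi)

/-- Uniqueness of representations with coefficients bounded by `2^i`. -/
lemma val_inj {c c' : ℕ →₀ ℤ} (hc : ∀ i, |c i| ≤ 2^i) (hc' : ∀ i, |c' i| ≤ 2^i)
    (h : val c = val c') : c = c' := by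
  have hd : val (c - c') = 0 := by rw [map_sub, h, sub_self]
  have hbd : ∀ i, |(c - c') i| ≤ 2*2^i := by
    intro i
    have := abs_sub_abs_le_abs_sub (c i) (c' i)
    have h2 := abs_sub (c i) (c' i)
    calc |(c - c') i| = |c i - c' i| := by rw [Finsupp.sub_apply]
    _ ≤ |c i| + |c' i| := abs_sub _ _
    _ ≤ 2^i + 2^i := add_le_add (hc i) (hc' i)
    _ = 2*2^i := by ring
  have := eq_zero_aux ((c - c').support.sup id + 1) (c - c') hbd ?_ hd
  · exact sub_eq_zero.mp this
  · intro i hi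
    rw [Finset.mem_range, Nat.lt_succ_iff]
    exact Finset.le_sup (f := id) hi

end MonoEmbAux

namespace MonoEmbAux

variable {E : Type} [AddCommGroup E]

/-- Pairing of coefficients with a sequence of vectors. -/
noncomputable def Phi (v : ℕ → E) : (ℕ →₀ ℤ) →+ E :=
  Finsupp.liftAddHom fun i => zmultiplesHom E (v i)

lemma Phi_single (v : ℕ → E) (i : ℕ) (m : ℤ) :
    Phi v (Finsupp.single i m) = m • v i := by
  simp [Phi, Finsupp.liftAddHom_apply_single]

/-- The twisting map `φ : ℤ → E`. -/
noncomputable def phi (v : ℕ → E) (n : ℤ) : E := by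
  classical
  exact if h : ∃ c : ℕ →₀ ℤ, (∀ i, |c i| ≤ 2^i) ∧ val c = n then Phi v h.choose else 0

lemma phi_val (v : ℕ → E) {c : ℕ →₀ ℤ} (hc : ∀ i, |c i| ≤ 2^i) :
    phi v (val c) = Phi v c := by
  have h : ∃ c' : ℕ →₀ ℤ, (∀ i, |c' i| ≤ 2^i) ∧ val c' = val c := ⟨c, hc, rfl⟩
  simp only [phi]
  rw [dif_pos h]
  rw [val_inj h.choose_spec.1 hc h.choose_spec.2]

lemma phi_zero (v : ℕ → E) : phi v 0 = 0 := by
  have h := phi_val v (c := 0) (by intro i; simp)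
  simpa using h

end MonoEmbAux
section MainProof

open Filter Set Topology MonoEmbAux

/-- Let `E` be a real topological vector space whose topology is coarser than
some separable metrizable vector topology `t'` on the same vector space.  Then
`E` embeds as a topological subgroup into a monothetic topological group.
(In Mathlib's order on topologies, `t' ≤ tE` means `t'` is finer than `tE`.) -/
theorem tvs_with_finer_separable_metrizable_topology_embeds
    (E : Type) [AddCommGroup E] [Module ℝ E] [tE : TopologicalSpace E]
    [IsTopologicalAddGroup E] [ContinuousSMul ℝ E]
    (t' : TopologicalSpace E) (hfiner : t' ≤ tE)
    (h1 : @IsTopologicalAddGroup E t' _)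
    (h2 : @ContinuousSMul ℝ E _ _ t')
    (h3 : @TopologicalSpace.MetrizableSpace E t')
    (h4 : @TopologicalSpace.SeparableSpace E t') :
    Nonempty (MonotheticEmbedding E) := by
  classical
  -- a sequence dense for `tE`
  obtain ⟨z, hz'⟩ := @TopologicalSpace.exists_dense_seq E t' h4 ⟨0⟩
  have hzmem : ∀ (x : E) (N : Set E), N ∈ @nhds E t' x → ∃ j, z j ∈ N := by
    intro x N hN
    rcases mem_closure_iff_nhds.mp (hz' x) N hN with ⟨y, hyN, j, rfl⟩
    exact ⟨j, hyN⟩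
  -- the data of the construction
  set v : ℕ → E := fun i => z (Nat.unpair i).1 with hv
  set W : ℕ → Set ℤ := fun k =>
    {n | ∃ c : ℕ →₀ ℤ, (∀ i, 2^k * |c i| ≤ 2^i) ∧ MonoEmbAux.val c = n} with hWdef
  set Vs : Set E → ℕ → Set (E × ℤ) := fun U k =>
    {p | p.2 ∈ W k ∧ p.1 - phi v p.2 ∈ U} with hVsdef
  -- basic facts about W and phi
  have hRep : ∀ (k : ℕ) (c : ℕ →₀ ℤ), (∀ i, 2^k * |c i| ≤ 2^i) → ∀ i, |c i| ≤ 2^i := by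
    intro k c h i
    have h1 : (1:ℤ) ≤ 2^k := one_le_pow₀ (by norm_num)
    nlinarith [h i, abs_nonneg (c i)]
  have hWzero : ∀ k, (0:ℤ) ∈ W k := by
    intro k
    refine ⟨0, fun i => by simpa using (by positivity : (0:ℤ) ≤ 2^i), by simp⟩
  have hphiW : ∀ k, ∀ n ∈ W k, ∃ c : ℕ →₀ ℤ, (∀ i, 2^k * |c i| ≤ 2^i) ∧
      MonoEmbAux.val c = n ∧ phi v n = Phi v c := by
    rintro k n ⟨c, hc, rfl⟩
    exact ⟨c, hc, rfl, phi_val v (hRep k c hc)⟩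
  have hWmono : ∀ k k' : ℕ, k ≤ k' → W k' ⊆ W k := by
    rintro k k' hkk n ⟨c, hc, rfl⟩
    refine ⟨c, fun i => ?_, rfl⟩
    calc (2:ℤ)^k * |c i| ≤ 2^k' * |c i| :=
          mul_le_mul_of_nonneg_right (pow_le_pow_right₀ (by norm_num) hkk) (abs_nonneg _)
    _ ≤ 2^i := hc i
  have hWadd : ∀ (k : ℕ), ∀ n ∈ W (k+1), ∀ n' ∈ W (k+1),
      (n + n') ∈ W k ∧ phi v (n + n') = phi v n + phi v n' := by
    intro k n hn n' hn'
    obtain ⟨c, hc, rfl, hpc⟩ := hphiW _ _ hn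
    obtain ⟨c', hc', rfl, hpc'⟩ := hphiW _ _ hn'
    have hbd : ∀ i, 2^k * |(c + c') i| ≤ 2^i := by
      intro i
      have e1 : (2:ℤ)^(k+1) = 2 * 2^k := by rw [pow_succ]; ring
      have e2 := hc i; have e3 := hc' i
      rw [e1] at e2 e3
      have habs : |(c + c') i| ≤ |c i| + |c' i| := by
        rw [Finsupp.add_apply]; exact abs_add_le _ _
      have hp : (0:ℤ) < 2^k := by positivity
      nlinarith
    have hvadd : MonoEmbAux.val (c + c') = MonoEmbAux.val c + MonoEmbAux.val c' := map_add _ _ _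
    constructor
    · exact ⟨c + c', hbd, hvadd⟩
    · rw [← hvadd, phi_val v (hRep k _ hbd), map_add, hpc, hpc']
  have hWneg : ∀ (k : ℕ), ∀ n ∈ W k, (-n) ∈ W k ∧ phi v (-n) = - phi v n := by
    intro k n hn
    obtain ⟨c, hc, rfl, hpc⟩ := hphiW _ _ hn
    have hbd : ∀ i, 2^k * |(-c) i| ≤ 2^i := by
      intro i; rw [Finsupp.neg_apply, abs_neg]; exact hc i
    have hvneg : MonoEmbAux.val (-c) = - MonoEmbAux.val c := map_neg _ _
    refine ⟨⟨-c, hbd, hvneg⟩, ?_⟩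
    rw [← hvneg, phi_val v (hRep k _ hbd), map_neg, hpc]
  have hWsingle : ∀ (k j : ℕ), ((b (Nat.pair j k) : ℤ)) ∈ W k ∧
      phi v (b (Nat.pair j k)) = z j := by
    intro k j
    set i₀ := Nat.pair j k with hi₀
    have hki : k ≤ i₀ := Nat.right_le_pair j k
    have hbd : ∀ i, 2^k * |(Finsupp.single i₀ (1:ℤ)) i| ≤ 2^i := by
      intro i
      rcases eq_or_ne i i₀ with h | h
      · subst h
        simp only [Finsupp.single_apply, if_pos rfl]
        simpa using pow_le_pow_right₀ (by norm_num : (1:ℤ) ≤ 2) hki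
      · rw [Finsupp.single_apply, if_neg (by omega)]
        simpa using (by positivity : (0:ℤ) ≤ 2^i)
    have hval : MonoEmbAux.val (Finsupp.single i₀ (1:ℤ)) = b i₀ := by
      rw [val_single]; ring
    constructor
    · exact ⟨Finsupp.single i₀ 1, hbd, hval⟩
    · rw [← hval, phi_val v (hRep k _ hbd), Phi_single]
      simp [hv, hi₀, Nat.unpair_pair]
  have hphi0 : phi v (0:ℤ) = 0 := phi_zero v
  -- the filter basis
  set BS : Set (Set (E × ℤ)) := {S | ∃ U ∈ 𝓝 (0:E), ∃ k : ℕ, S = Vs U k} with hBS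
  have hmemVs : ∀ (U : Set E) (k : ℕ), U ∈ 𝓝 (0:E) → Vs U k ∈ BS :=
    fun U k hU => ⟨U, hU, k, rfl⟩
  letI B : AddGroupFilterBasis (E × ℤ) := by
    refine addGroupFilterBasisOfComm BS ⟨Vs univ 0, hmemVs _ _ univ_mem⟩ ?_ ?_ ?_ ?_
    · -- inter
      rintro _ _ ⟨U, hU, k, rfl⟩ ⟨U', hU', k', rfl⟩
      refine ⟨Vs (U ∩ U') (max k k'), hmemVs _ _ (inter_mem hU hU'), ?_⟩
      rintro p ⟨hp2, hp1⟩
      exact ⟨⟨hWmono _ _ (le_max_left _ _) hp2, hp1.1⟩,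
             ⟨hWmono _ _ (le_max_right _ _) hp2, hp1.2⟩⟩
    · -- zero
      rintro _ ⟨U, hU, k, rfl⟩
      exact ⟨hWzero k, by simpa [hphi0] using mem_of_mem_nhds hU⟩
    · -- add
      rintro _ ⟨U, hU, k, rfl⟩
      obtain ⟨U₁, hU₁, hU₁U⟩ := exists_nhds_zero_half hU
      refine ⟨Vs U₁ (k+1), hmemVs _ _ hU₁, ?_⟩
      rintro _ ⟨p, hp, q, hq, rfl⟩
      obtain ⟨hW, hphiadd⟩ := hWadd k p.2 hp.1 q.2 hq.1
      refine ⟨hW, ?_⟩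
      have : (p + q).1 - phi v (p + q).2 = (p.1 - phi v p.2) + (q.1 - phi v q.2) := by
        rw [Prod.fst_add, Prod.snd_add, hphiadd]; abel
      rw [this]
      exact hU₁U _ hp.2 _ hq.2
    · -- neg
      rintro _ ⟨U, hU, k, rfl⟩
      have hnU : (fun x : E => -x) ⁻¹' U ∈ 𝓝 (0:E) := by
        have : Tendsto (fun x : E => -x) (𝓝 0) (𝓝 0) := by
          simpa using (continuous_neg (G := E)).tendsto (0:E)
        exact this hU
      refine ⟨Vs ((fun x : E => -x) ⁻¹' U) k, hmemVs _ _ hnU, ?_⟩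
      rintro p ⟨hp2, hp1⟩
      obtain ⟨hW, hphineg⟩ := hWneg k p.2 hp2
      refine ⟨hW, ?_⟩
      show -p.1 - phi v (-p.2) ∈ U
      rw [hphineg]
      have : -p.1 - -phi v p.2 = -(p.1 - phi v p.2) := by abel
      rw [this]
      exact hp1
  letI tH : TopologicalSpace (E × ℤ) := B.topology
  haveI htg : @IsTopologicalAddGroup (E × ℤ) tH _ := B.isTopologicalAddGroup
  -- helper: neighborhoods of 0 in E give neighborhoods via subtraction
  have hsubnhds : ∀ (x : E) (U : Set E), U ∈ 𝓝 (0:E) → {x' : E | x' - x ∈ U} ∈ 𝓝 x := by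
    intro x U hU
    have : Tendsto (fun x' : E => x' - x) (𝓝 x) (𝓝 0) := by
      exact (continuous_sub_right x).tendsto' x 0 (sub_self x)
    exact this hU
  refine ⟨{ H := E × ℤ
            grp := inferInstance
            top := tH
            topgrp := htg
            f := AddMonoidHom.inl E ℤ
            inj := fun a b h => by simpa using congrArg Prod.fst h
            monothetic := ?_
            cont := ?_
            open_onto_image := ?_ }⟩
  · -- monothetic
    refine ⟨((0:E), (1:ℤ)), fun p => ?_⟩
    rw [mem_closure_iff_nhds_basis (B.nhds_hasBasis p)]
    rintro _ ⟨U, hU, k, rfl⟩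
    have hN : {t : E | -p.1 - t ∈ U} ∈ 𝓝 (-p.1) := by
      have hcont : Continuous fun t : E => -p.1 - t := by
        exact (continuous_const.sub continuous_id)
      have : Tendsto (fun t : E => -p.1 - t) (𝓝 (-p.1)) (𝓝 0) := by
        have := hcont.tendsto (-p.1)
        simpa using this
      exact this hU
    obtain ⟨j, hj⟩ := hzmem _ _ hN
    obtain ⟨hWb, hphib⟩ := hWsingle k j
    refine ⟨((0:E), p.2 + b (Nat.pair j k)), ?_, ?_⟩
    · show _ ∈ (AddSubgroup.zmultiples ((0:E), (1:ℤ)) : Set (E × ℤ))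
      refine ⟨p.2 + b (Nat.pair j k), ?_⟩
      ext
      · simp
      · simp
    · refine ⟨((-p.1 : E), (b (Nat.pair j k) : ℤ)), ⟨hWb, ?_⟩, ?_⟩
      · rw [hphib]; exact hj
      · ext
        · simp
        · simp
  · -- continuity
    rw [continuous_iff_continuousAt]
    intro x
    unfold ContinuousAt
    rw [(B.nhds_hasBasis _).tendsto_right_iff]
    rintro _ ⟨U, hU, k, rfl⟩
    filter_upwards [hsubnhds x U hU] with x' hx'
    refine ⟨(x' - x, 0), ⟨hWzero k, by simpa [hphi0] using hx'⟩, ?_⟩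
    show ((x : E), (0:ℤ)) + (x' - x, 0) = _
    ext
    · simp
    · simp
  · -- open onto image
    intro U hU
    have hNu : ∀ u, u ∈ U → (fun e : E => u + e) ⁻¹' U ∈ 𝓝 (0:E) := by
      intro u hu
      exact (hU.preimage (continuous_add_left u)).mem_nhds (by simpa using hu)
    set Su := fun u : E =>
      (fun p : E × ℤ => p - ((u : E), (0:ℤ))) ⁻¹' (Vs ((fun e : E => u + e) ⁻¹' U) 0)
      with hSu
    have hSunhds : ∀ u, u ∈ U → Su u ∈ @nhds (E × ℤ) tH ((u, 0)) := by
      intro u hu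
      have hV0 : Vs ((fun e : E => u + e) ⁻¹' U) 0 ∈ @nhds (E × ℤ) tH 0 :=
        B.mem_nhds_zero (hmemVs _ _ (hNu u hu))
      have hcont : @Continuous _ _ tH tH fun p : E × ℤ => p - ((u : E), (0:ℤ)) :=
        continuous_id.sub continuous_const
      have := hcont.continuousAt (x := ((u : E), (0:ℤ)))
      exact this.preimage_mem_nhds (by simpa using hV0)
    refine ⟨⋃ u ∈ U, interior (Su u), isOpen_iUnion fun u => isOpen_iUnion fun _ =>
      isOpen_interior, ?_⟩
    ext p
    constructor
    · rintro ⟨x, hxU, rfl⟩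
      constructor
      · exact mem_iUnion.mpr ⟨x, mem_iUnion.mpr ⟨hxU,
          mem_interior_iff_mem_nhds.mpr (hSunhds x hxU)⟩⟩
      · exact ⟨x, rfl⟩
    · rintro ⟨hp, x, rfl⟩
      obtain ⟨u, hu⟩ := mem_iUnion.mp hp
      obtain ⟨huU, hpu⟩ := mem_iUnion.mp hu
      have h2 := interior_subset hpu
      have h3 : ((x : E), (0:ℤ)) - ((u : E), (0:ℤ)) ∈ Vs ((fun e : E => u + e) ⁻¹' U) 0 := h2
      obtain ⟨-, h4⟩ := h3
      have h5 : x - u - phi v ((0:ℤ) - 0) ∈ (fun e : E => u + e) ⁻¹' U := h4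
      rw [sub_zero, hphi0, sub_zero] at h5
      have : u + (x - u) ∈ U := h5
      rw [add_sub_cancel] at this
      exact ⟨x, this, rfl⟩

end MainProof
end

section
/- For any pseudometric ρ on a pointed set (X,*), the Graev pseudometric ρ̄ on the free abelian group A(X,*) (the maximal translation-invariant pseudometric extending ρ from X) coincides with the pseudometric induced by the maximal seminorm p_ρ on the free vector space L(X,*) extending ρ, i.e., p_ρ(x − y) = ρ̄(x, y) for all x, y ∈ A(X,*). In particular (A(X,*), ρ̄) is isometrically isomorphic as a topological group to a subgroup of the seminormed space (L(X,*), p_ρ). -/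
section TkachenkoUspenskij

variable (X : Type) [DecidableEq X] (pt : X)

noncomputable def jFreeA : X → ({y : X // y ≠ pt} →₀ ℤ) :=
  fun x => if h : x = pt then 0 else Finsupp.single ⟨x, h⟩ 1

noncomputable def inclAL : ({y : X // y ≠ pt} →₀ ℤ) →+ ({y : X // y ≠ pt} →₀ ℝ) :=
  Finsupp.mapRange.addMonoidHom (Int.castAddHom ℝ)

def IsInvariantPseudometric {A : Type} [AddCommGroup A] (q : A → A → ℝ) : Prop :=
  (∀ a, q a a = 0) ∧ (∀ a b, q a b = q b a) ∧
  (∀ a b c, q a c ≤ q a b + q b c) ∧ (∀ a b c, q (a + c) (b + c) = q a b)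

def IsSeminormOn {L : Type} [AddCommGroup L] [Module ℝ L] (p : L → ℝ) : Prop :=
  (∀ a b, p (a + b) ≤ p a + p b) ∧ (∀ (r : ℝ) a, p (r • a) = |r| * p a)

open scoped Classical

/-! ### Auxiliary definitions -/

/-- The canonical image of `x : X` in the free vector space. -/
noncomputable def ee (x : X) : {y : X // y ≠ pt} →₀ ℝ := inclAL X pt (jFreeA X pt x)

lemma incl_apply (a : {y : X // y ≠ pt} →₀ ℤ) (z : {y : X // y ≠ pt}) :
    inclAL X pt a z = (a z : ℝ) := rfl

lemma incl_injective : Function.Injective (inclAL X pt) := by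
  intro a b hab
  ext z
  have := congrArg (fun v => v z) hab
  simpa [incl_apply, Int.cast_injective.eq_iff] using this

lemma ee_pt : ee X pt pt = 0 := by simp [ee, jFreeA]

lemma ee_of_ne {x : X} (h : x ≠ pt) : ee X pt x = Finsupp.single ⟨x, h⟩ 1 := by
  simp [ee, jFreeA, h, inclAL]

lemma ee_apply (x : X) (z : {y : X // y ≠ pt}) :
    ee X pt x z = if x = z.1 then 1 else 0 := by
  by_cases h : x = pt
  · have hxz : x ≠ z.1 := fun hz => z.2 (hz ▸ h : z.1 = pt)
    rw [h, ee_pt]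
    have : pt ≠ z.1 := fun hz => z.2 hz.symm
    simp [this]
  · rw [ee_of_ne X pt h, Finsupp.single_apply]
    by_cases h2 : x = z.1
    · simp [h2, Subtype.ext_iff]
    · have : (⟨x, h⟩ : {y : X // y ≠ pt}) ≠ z := fun hc => h2 (congrArg Subtype.val hc)
      simp [Subtype.ext_iff, h2]

/-- The set of costs of representations of a vector `v`. -/
def repCosts (ρ : X → X → ℝ) (v : {y : X // y ≠ pt} →₀ ℝ) : Set ℝ :=
  {r | ∃ (n : ℕ) (x y : Fin n → X) (c : Fin n → ℝ),
    (∑ i, c i • (ee X pt (x i) - ee X pt (y i))) = v ∧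
    (∑ i, |c i| * ρ (x i) (y i)) = r}

/-- The maximal seminorm, via the infimum formula. -/
noncomputable def FF (ρ : X → X → ℝ) (v : {y : X // y ≠ pt} →₀ ℝ) : ℝ :=
  sInf (repCosts X pt ρ v)

/-! ### Main auxiliary lemmas (to be proven) -/

lemma repCosts_nonempty (ρ : X → X → ℝ) (v : {y : X // y ≠ pt} →₀ ℝ) :
    (repCosts X pt ρ v).Nonempty := by
  classical
  set n := v.support.card with hn
  set e : Fin n → {y : X // y ≠ pt} := fun i => (v.support.equivFin.symm i).1 with he
  refine ⟨_, n, fun i => (e i).1, fun _ => pt, fun i => v (e i), ?_, rfl⟩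
  have h1 : ∀ i, ee X pt (e i).1 - ee X pt pt = Finsupp.single (e i) 1 := by
    intro i
    rw [ee_pt, sub_zero, ee_of_ne X pt (e i).2]
  have h2 : ∀ i, v (e i) • (ee X pt (e i).1 - ee X pt pt) = Finsupp.single (e i) (v (e i)) := by
    intro i
    rw [h1, Finsupp.smul_single, smul_eq_mul, mul_one]
  calc (∑ i, v (e i) • (ee X pt (e i).1 - ee X pt pt))
      = ∑ i, Finsupp.single (e i) (v (e i)) := by
        exact Finset.sum_congr rfl fun i _ => h2 i
    _ = v := by
        have hv : (∑ i : Fin n, Finsupp.single (e i) (v (e i)))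
            = ∑ z ∈ v.support, Finsupp.single z (v z) := by
          rw [← Finset.sum_coe_sort v.support (fun z => Finsupp.single z (v z))]
          exact Fintype.sum_bijective v.support.equivFin.symm (Equiv.bijective _) _ _
            (fun i => rfl)
        exact hv.trans (Finsupp.sum_single v)

lemma repCosts_nonneg (ρ : X → X → ℝ) (hρ_self : ∀ a, ρ a a = 0)
    (hρ_comm : ∀ a b, ρ a b = ρ b a) (hρ_tri : ∀ a b c, ρ a c ≤ ρ a b + ρ b c)
    (v : {y : X // y ≠ pt} →₀ ℝ) : ∀ r ∈ repCosts X pt ρ v, 0 ≤ r := by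
  have hρ0 : ∀ x y, 0 ≤ ρ x y := by
    intro x y
    have h1 := hρ_tri x y x
    rw [hρ_self, hρ_comm y x] at h1
    linarith
  rintro r ⟨n, x, y, c, -, rfl⟩
  exact Finset.sum_nonneg fun i _ => mul_nonneg (abs_nonneg _) (hρ0 _ _)

lemma cost_lower_bound (ρ : X → X → ℝ) (f : X → ℝ) (hf : ∀ x y, |f x - f y| ≤ ρ x y)
    {n : ℕ} (x y : Fin n → X) (c : Fin n → ℝ) :
    |(Finsupp.linearCombination ℝ (fun z : {y : X // y ≠ pt} => f z.1 - f pt))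
        (∑ i, c i • (ee X pt (x i) - ee X pt (y i)))| ≤
      ∑ i, |c i| * ρ (x i) (y i) := by
  set φ := Finsupp.linearCombination ℝ (fun z : {y : X // y ≠ pt} => f z.1 - f pt) with hφdef
  have hφ : ∀ x : X, φ (ee X pt x) = f x - f pt := by
    intro x
    by_cases h : x = pt
    · rw [h, ee_pt, map_zero, sub_self]
    · rw [ee_of_ne X pt h, hφdef, Finsupp.linearCombination_single, one_smul]
  have h1 : φ (∑ i, c i • (ee X pt (x i) - ee X pt (y i))) = ∑ i, c i * (f (x i) - f (y i)) := by
    rw [map_sum]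
    refine Finset.sum_congr rfl fun i _ => ?_
    rw [map_smul, map_sub, hφ, hφ, smul_eq_mul]
    ring
  rw [h1]
  calc |∑ i, c i * (f (x i) - f (y i))| ≤ ∑ i, |c i * (f (x i) - f (y i))| :=
        Finset.abs_sum_le_sum_abs _ _
    _ ≤ ∑ i, |c i| * ρ (x i) (y i) := by
        refine Finset.sum_le_sum fun i _ => ?_
        rw [abs_mul]
        exact mul_le_mul_of_nonneg_left (hf _ _) (abs_nonneg _)

set_option maxHeartbeats 1000000 in
lemma dependent_of_degree {n : ℕ} (x y : Fin n → X) (s : Finset (Fin n)) (hs : s.Nonempty)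
    (hdeg : ∀ z : X, z ≠ pt →
      ((s.filter (fun i => x i = z)).card + (s.filter (fun i => y i = z)).card ≠ 1)) :
    ¬ LinearIndependent ℝ (fun i : s => ee X pt (x i.1) - ee X pt (y i.1)) := by
  intro hli
  set u : Fin n → ({y : X // y ≠ pt} →₀ ℝ) := fun i => ee X pt (x i) - ee X pt (y i) with hu
  set V' : Finset X := ((s.filter (fun i => x i ≠ pt)).image x) ∪
      ((s.filter (fun i => y i ≠ pt)).image y) with hV'
  have hV'ne : ∀ z ∈ V', z ≠ pt := by
    intro z hz
    rw [hV', Finset.mem_union] at hz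
    rcases hz with hz | hz <;>
    · obtain ⟨i, hi, rfl⟩ := Finset.mem_image.1 hz
      exact (Finset.mem_filter.1 hi).2
  set gens : Finset ({y : X // y ≠ pt} →₀ ℝ) :=
    V'.attach.image (fun z => Finsupp.single ⟨z.1, hV'ne z.1 z.2⟩ (1 : ℝ)) with hgens
  set M : Submodule ℝ ({y : X // y ≠ pt} →₀ ℝ) := Submodule.span ℝ (gens : Set _) with hM
  have hsingleM : ∀ (z : X) (hz : z ∈ V'), Finsupp.single ⟨z, hV'ne z hz⟩ (1 : ℝ) ∈ M := by
    intro z hz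
    apply Submodule.subset_span
    exact Finset.mem_coe.2 (Finset.mem_image.2 ⟨⟨z, hz⟩, Finset.mem_attach _ _, rfl⟩)
  have heeM : ∀ zz : X, (zz = pt ∨ zz ∈ V') → ee X pt zz ∈ M := by
    intro zz h
    rcases h with h | h
    · rw [h, ee_pt]; exact M.zero_mem
    · rw [ee_of_ne X pt (hV'ne zz h)]; exact hsingleM zz h
  have hxV : ∀ i ∈ s, x i = pt ∨ x i ∈ V' := by
    intro i hi
    by_cases h : x i = pt
    · exact Or.inl h
    · exact Or.inr (Finset.mem_union_left _
        (Finset.mem_image.2 ⟨i, Finset.mem_filter.2 ⟨hi, h⟩, rfl⟩))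
  have hyV : ∀ i ∈ s, y i = pt ∨ y i ∈ V' := by
    intro i hi
    by_cases h : y i = pt
    · exact Or.inl h
    · exact Or.inr (Finset.mem_union_right _
        (Finset.mem_image.2 ⟨i, Finset.mem_filter.2 ⟨hi, h⟩, rfl⟩))
  have hmemM : ∀ i ∈ s, u i ∈ M := fun i hi => M.sub_mem (heeM _ (hxV i hi)) (heeM _ (hyV i hi))
  have hfin : FiniteDimensional ℝ M := FiniteDimensional.span_of_finite ℝ (Finset.finite_toSet gens)
  have hrankM : Module.finrank ℝ M ≤ V'.card := by
    refine le_trans (finrank_span_finset_le_card gens) (le_trans Finset.card_image_le ?_)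
    simp
  have key : ∀ N : Submodule ℝ ({y : X // y ≠ pt} →₀ ℝ), FiniteDimensional ℝ N →
      (∀ i ∈ s, u i ∈ N) → s.card ≤ Module.finrank ℝ N := by
    intro N hNfin hmem
    haveI := hNfin
    have hsp : Submodule.span ℝ (Set.range fun i : s => ee X pt (x i.1) - ee X pt (y i.1)) ≤ N := by
      rw [Submodule.span_le]
      rintro - ⟨i, rfl⟩
      exact hmem i.1 i.2
    have h2 : Module.finrank ℝ
        (Submodule.span ℝ (Set.range fun i : s => ee X pt (x i.1) - ee X pt (y i.1)))
        = Fintype.card s := finrank_span_eq_card hli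
    have h3 := Submodule.finrank_mono hsp
    rw [h2, Fintype.card_coe] at h3
    exact h3
  have hcards : s.card ≤ V'.card := le_trans (key M hfin hmemM) hrankM
  have hdeg2 : ∀ z ∈ V',
      2 ≤ (s.filter (fun i => x i = z)).card + (s.filter (fun i => y i = z)).card := by
    intro z hz
    have h2 := hdeg z (hV'ne z hz)
    have h1 : 1 ≤ (s.filter (fun i => x i = z)).card + (s.filter (fun i => y i = z)).card := by
      rw [hV', Finset.mem_union] at hz
      rcases hz with hz | hz
      · obtain ⟨i, hi, rfl⟩ := Finset.mem_image.1 hz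
        have hmem : i ∈ s.filter (fun j => x j = x i) :=
          Finset.mem_filter.2 ⟨(Finset.mem_filter.1 hi).1, rfl⟩
        have := Finset.card_pos.2 ⟨i, hmem⟩
        omega
      · obtain ⟨i, hi, rfl⟩ := Finset.mem_image.1 hz
        have hmem : i ∈ s.filter (fun j => y j = y i) :=
          Finset.mem_filter.2 ⟨(Finset.mem_filter.1 hi).1, rfl⟩
        have := Finset.card_pos.2 ⟨i, hmem⟩
        omega
    omega
  have hsumx : (s.filter (fun i => x i ≠ pt)).card
      = ∑ z ∈ V', (s.filter (fun i => x i = z)).card := by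
    rw [Finset.card_eq_sum_card_fiberwise (f := x) (t := V')
      (fun i hi => Finset.mem_union_left _ (Finset.mem_image.2 ⟨i, hi, rfl⟩))]
    refine Finset.sum_congr rfl fun z hz => congrArg Finset.card ?_
    ext i
    simp only [Finset.mem_filter]
    constructor
    · rintro ⟨⟨hi, _⟩, hxi⟩; exact ⟨hi, hxi⟩
    · rintro ⟨hi, hxi⟩; exact ⟨⟨hi, hxi ▸ hV'ne z hz⟩, hxi⟩
  have hsumy : (s.filter (fun i => y i ≠ pt)).card
      = ∑ z ∈ V', (s.filter (fun i => y i = z)).card := by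
    rw [Finset.card_eq_sum_card_fiberwise (f := y) (t := V')
      (fun i hi => Finset.mem_union_right _ (Finset.mem_image.2 ⟨i, hi, rfl⟩))]
    refine Finset.sum_congr rfl fun z hz => congrArg Finset.card ?_
    ext i
    simp only [Finset.mem_filter]
    constructor
    · rintro ⟨⟨hi, _⟩, hxi⟩; exact ⟨hi, hxi⟩
    · rintro ⟨hi, hxi⟩; exact ⟨⟨hi, hxi ▸ hV'ne z hz⟩, hxi⟩
  have hcount : 2 * V'.card
      ≤ (s.filter (fun i => x i ≠ pt)).card + (s.filter (fun i => y i ≠ pt)).card := by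
    rw [hsumx, hsumy, ← Finset.sum_add_distrib]
    calc 2 * V'.card = ∑ _z ∈ V', 2 := by rw [Finset.sum_const, smul_eq_mul, mul_comm]
      _ ≤ _ := Finset.sum_le_sum hdeg2
  have hfx : (s.filter (fun i => x i ≠ pt)).card ≤ s.card := Finset.card_filter_le _ _
  have hfy : (s.filter (fun i => y i ≠ pt)).card ≤ s.card := Finset.card_filter_le _ _
  have hxpt : ∀ i ∈ s, x i ≠ pt := by
    intro i hi hcon
    have hlt : (s.filter (fun i => x i ≠ pt)).card < s.card :=
      Finset.card_lt_card ((Finset.ssubset_iff_of_subset (Finset.filter_subset _ _)).2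
        ⟨i, hi, by simp [Finset.mem_filter, hcon]⟩)
    omega
  have hypt : ∀ i ∈ s, y i ≠ pt := by
    intro i hi hcon
    have hlt : (s.filter (fun i => y i ≠ pt)).card < s.card :=
      Finset.card_lt_card ((Finset.ssubset_iff_of_subset (Finset.filter_subset _ _)).2
        ⟨i, hi, by simp [Finset.mem_filter, hcon]⟩)
    omega
  set T : ({y : X // y ≠ pt} →₀ ℝ) →ₗ[ℝ] ℝ :=
    Finsupp.linearCombination ℝ (fun _ : {y : X // y ≠ pt} => (1 : ℝ)) with hT
  have hTee : ∀ zz : X, zz ≠ pt → T (ee X pt zz) = 1 := by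
    intro zz h
    rw [ee_of_ne X pt h, hT, Finsupp.linearCombination_single, smul_eq_mul, mul_one]
  have hTu : ∀ i ∈ s, T (u i) = 0 := by
    intro i hi
    rw [hu]
    simp only []
    rw [map_sub, hTee _ (hxpt i hi), hTee _ (hypt i hi), sub_self]
  set N : Submodule ℝ ({y : X // y ≠ pt} →₀ ℝ) := M ⊓ LinearMap.ker T with hN
  have hNle : N ≤ M := inf_le_left
  have hNfin : FiniteDimensional ℝ N := Submodule.finiteDimensional_of_le hNle
  have hmemN : ∀ i ∈ s, u i ∈ N :=
    fun i hi => Submodule.mem_inf.2 ⟨hmemM i hi, LinearMap.mem_ker.2 (hTu i hi)⟩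
  have hNM : N < M := by
    obtain ⟨i0, hi0⟩ := hs
    have hz0 : x i0 ∈ V' := by
      rcases hxV i0 hi0 with h | h
      · exact absurd h (hxpt i0 hi0)
      · exact h
    refine lt_of_le_of_ne hNle fun hEq => ?_
    have h1 : ee X pt (x i0) ∈ M := heeM _ (Or.inr hz0)
    rw [← hEq] at h1
    have h2 := (Submodule.mem_inf.1 h1).2
    rw [LinearMap.mem_ker, hTee _ (hV'ne _ hz0)] at h2
    exact one_ne_zero h2
  have hlt : Module.finrank ℝ N < Module.finrank ℝ M := Submodule.finrank_lt_finrank_of_lt hNM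
  have hfinal := key N hNfin hmemN
  omega


lemma exists_int_sum {ι : Type} (t : Finset ι) (f : ι → ℝ)
    (h : ∀ i ∈ t, ∃ m : ℤ, (m : ℝ) = f i) : ∃ M : ℤ, (M : ℝ) = ∑ i ∈ t, f i := by
  induction t using Finset.cons_induction with
  | empty => exact ⟨0, by simp⟩
  | cons i t hit ihs =>
    obtain ⟨m1, hm1⟩ := h i (Finset.mem_cons_self _ _)
    obtain ⟨M1, hM1⟩ := ihs fun j hj => h j (Finset.mem_cons_of_mem hj)
    exact ⟨m1 + M1, by rw [Finset.sum_cons, Int.cast_add, hm1, hM1]⟩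

lemma roundRep (ρ : X → X → ℝ) :
    ∀ (k n : ℕ) (x y : Fin n → X) (c : Fin n → ℝ) (a : {y : X // y ≠ pt} →₀ ℤ),
    (Finset.univ.filter (fun i => ¬ ∃ m : ℤ, (m : ℝ) = c i)).card ≤ k →
    (∑ i, c i • (ee X pt (x i) - ee X pt (y i))) = inclAL X pt a →
    ∃ (m : ℕ) (x' y' : Fin m → X) (d : Fin m → ℤ),
      (∑ i, d i • (jFreeA X pt (x' i) - jFreeA X pt (y' i))) = a ∧
      (∑ i, (|d i| : ℝ) * ρ (x' i) (y' i)) ≤ ∑ i, |c i| * ρ (x i) (y i) := by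
  intro k
  induction k with
  | zero =>
    intro n x y c a hcard hval
    have hall : ∀ i, ∃ m : ℤ, (m : ℝ) = c i := by
      intro i
      by_contra h
      have h1 : i ∈ Finset.univ.filter (fun i => ¬ ∃ m : ℤ, (m : ℝ) = c i) :=
        Finset.mem_filter.2 ⟨Finset.mem_univ _, h⟩
      have := Finset.card_pos.2 ⟨i, h1⟩
      omega
    choose d hd using hall
    refine ⟨n, x, y, d, ?_, ?_⟩
    · apply incl_injective X pt
      rw [← hval, map_sum]
      refine Finset.sum_congr rfl fun i _ => ?_
      rw [map_zsmul, map_sub, ← Int.cast_smul_eq_zsmul ℝ, hd]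
      rfl
    · refine le_of_eq (Finset.sum_congr rfl fun i _ => ?_)
      rw [← hd i]
  | succ k ih =>
    intro n x y c a hcard hval
    set s := Finset.univ.filter (fun i => ¬ ∃ m : ℤ, (m : ℝ) = c i) with hsdef
    by_cases hsk : s.card ≤ k
    · exact ih n x y c a hsk hval
    have hsne : s.Nonempty := by
      rw [← Finset.card_pos]; omega
    have hfrac : ∀ i ∈ s, ¬ ∃ m : ℤ, (m : ℝ) = c i := fun i hi => (Finset.mem_filter.1 hi).2
    have hint : ∀ i, i ∉ s → ∃ m : ℤ, (m : ℝ) = c i := by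
      intro i hi
      by_contra h
      exact hi (Finset.mem_filter.2 ⟨Finset.mem_univ _, h⟩)
    -- degree condition for fractional edges
    have hdeg : ∀ z : X, z ≠ pt →
        ((s.filter (fun i => x i = z)).card + (s.filter (fun i => y i = z)).card ≠ 1) := by
      intro z hz h1
      have hcoord : (∑ i, c i * ((if x i = z then (1:ℝ) else 0) - (if y i = z then (1:ℝ) else 0)))
          = ((a ⟨z, hz⟩ : ℤ) : ℝ) := by
        have h2 := congrArg (fun v : {y : X // y ≠ pt} →₀ ℝ => v ⟨z, hz⟩) hval
        simpa [Finsupp.finset_sum_apply, Finsupp.sub_apply, Finsupp.smul_apply, smul_eq_mul,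
          ee_apply, incl_apply] using h2
      -- split the sum into fractional and integral parts
      have hsplit : (∑ i ∈ s, c i * ((if x i = z then (1:ℝ) else 0) - (if y i = z then 1 else 0)))
          + (∑ i ∈ Finset.univ.filter (fun i => ¬ ¬ ∃ m : ℤ, (m : ℝ) = c i),
              c i * ((if x i = z then (1:ℝ) else 0) - (if y i = z then 1 else 0)))
          = ∑ i, c i * ((if x i = z then (1:ℝ) else 0) - (if y i = z then 1 else 0)) := by
        rw [hsdef]
        exact Finset.sum_filter_add_sum_filter_not _ _ _
      have hintterm : ∀ i ∈ Finset.univ.filter (fun i => ¬ ¬ ∃ m : ℤ, (m : ℝ) = c i),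
          ∃ m : ℤ, (m : ℝ) = c i * ((if x i = z then (1:ℝ) else 0) - (if y i = z then 1 else 0)) := by
        intro i hi
        obtain ⟨m1, hm1⟩ := not_not.1 (Finset.mem_filter.1 hi).2
        refine ⟨m1 * ((if x i = z then 1 else 0) - (if y i = z then 1 else 0)), ?_⟩
        split_ifs <;> push_cast <;> rw [← hm1] <;> ring
      obtain ⟨Mc, hMc⟩ := exists_int_sum (Finset.univ.filter (fun i => ¬ ¬ ∃ m : ℤ, (m : ℝ) = c i))
          (fun i => c i * ((if x i = z then (1:ℝ) else 0) - (if y i = z then 1 else 0))) hintterm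
      -- the fractional part is ± one fractional coefficient
      have e1 : (∑ i ∈ s.filter (fun i => x i = z), c i)
          = ∑ i ∈ s, if x i = z then c i else 0 := Finset.sum_filter _ _
      have e2 : (∑ i ∈ s.filter (fun i => y i = z), c i)
          = ∑ i ∈ s, if y i = z then c i else 0 := Finset.sum_filter _ _
      have hsx : (∑ i ∈ s, c i * ((if x i = z then (1:ℝ) else 0) - (if y i = z then 1 else 0)))
          = (∑ i ∈ s.filter (fun i => x i = z), c i) - ∑ i ∈ s.filter (fun i => y i = z), c i := by
        rw [e1, e2, ← Finset.sum_sub_distrib]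
        refine Finset.sum_congr rfl fun i _ => ?_
        split_ifs <;> ring
      by_cases hdx : (s.filter (fun i => x i = z)).card = 1
      · have hdy : (s.filter (fun i => y i = z)).card = 0 := by omega
        obtain ⟨i0, hi0⟩ := Finset.card_eq_one.1 hdx
        have hi0s : i0 ∈ s := by
          have : i0 ∈ s.filter (fun i => x i = z) := hi0 ▸ Finset.mem_singleton_self i0
          exact (Finset.mem_filter.1 this).1
        have hy0 : s.filter (fun i => y i = z) = ∅ := Finset.card_eq_zero.1 hdy
        apply hfrac i0 hi0s
        refine ⟨a ⟨z, hz⟩ - Mc, ?_⟩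
        have : c i0 + (Mc : ℝ) = ((a ⟨z, hz⟩ : ℤ) : ℝ) := by
          rw [← hcoord, ← hsplit, hsx, hi0, hy0, Finset.sum_singleton, Finset.sum_empty, ← hMc]
          ring
        push_cast
        linarith
      · have hdx0 : (s.filter (fun i => x i = z)).card = 0 := by omega
        have hdy : (s.filter (fun i => y i = z)).card = 1 := by omega
        obtain ⟨i0, hi0⟩ := Finset.card_eq_one.1 hdy
        have hi0s : i0 ∈ s := by
          have : i0 ∈ s.filter (fun i => y i = z) := hi0 ▸ Finset.mem_singleton_self i0
          exact (Finset.mem_filter.1 this).1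
        have hx0 : s.filter (fun i => x i = z) = ∅ := Finset.card_eq_zero.1 hdx0
        apply hfrac i0 hi0s
        refine ⟨Mc - a ⟨z, hz⟩, ?_⟩
        have : -(c i0) + (Mc : ℝ) = ((a ⟨z, hz⟩ : ℤ) : ℝ) := by
          rw [← hcoord, ← hsplit, hsx, hi0, hx0, Finset.sum_singleton, Finset.sum_empty, ← hMc]
          ring
        push_cast
        linarith
    -- a nontrivial kernel vector supported on the fractional edges
    obtain ⟨g, hgsum, i1, hg1⟩ :=
      Fintype.not_linearIndependent_iff.1 (dependent_of_degree X pt x y s hsne hdeg)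
    set w : Fin n → ℝ := fun i => if h : i ∈ s then g ⟨i, h⟩ else 0 with hw
    have hws : ∀ i, w i ≠ 0 → i ∈ s := by
      intro i h
      by_contra his
      simp only [hw] at h
      exact h (dif_neg his)
    have hwsum : ∑ i, w i • (ee X pt (x i) - ee X pt (y i)) = 0 := by
      calc ∑ i, w i • (ee X pt (x i) - ee X pt (y i))
          = ∑ i ∈ s, w i • (ee X pt (x i) - ee X pt (y i)) :=
            (Finset.sum_subset (Finset.subset_univ s)
              (fun i _ his => by simp only [hw]; rw [dif_neg his, zero_smul])).symm
        _ = ∑ i : s, g i • (ee X pt (x i.1) - ee X pt (y i.1)) := by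
            rw [← Finset.sum_coe_sort s (fun i => w i • (ee X pt (x i) - ee X pt (y i)))]
            refine Finset.sum_congr rfl fun i _ => ?_
            simp only [hw]
            rw [dif_pos i.2]
        _ = 0 := hgsum
    have hexw : w i1.1 ≠ 0 := by
      simp only [hw]
      rw [dif_pos i1.2]
      exact hg1
    set suppw := Finset.univ.filter (fun i => w i ≠ 0) with hsuppw
    have hsuppne : suppw.Nonempty := ⟨i1.1, Finset.mem_filter.2 ⟨Finset.mem_univ _, hexw⟩⟩
    set lo : Fin n → ℝ := fun i => (⌊c i⌋ : ℝ) with hlo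
    have hlo_lt : ∀ i ∈ s, lo i < c i := by
      intro i hi
      refine lt_of_le_of_ne (Int.floor_le _) fun h => hfrac i hi ⟨⌊c i⌋, h⟩
    have hhi_lt : ∀ i, c i < lo i + 1 := fun i => Int.lt_floor_add_one _
    set up : Fin n → ℝ := fun i => (if 0 < w i then lo i + 1 - c i else lo i - c i) / w i with hup
    set dn : Fin n → ℝ := fun i => (if 0 < w i then lo i - c i else lo i + 1 - c i) / w i with hdn
    have hwmem : ∀ i ∈ suppw, w i ≠ 0 := fun i hi => (Finset.mem_filter.1 hi).2
    have hsmem : ∀ i ∈ suppw, i ∈ s := fun i hi => hws i (hwmem i hi)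
    have hup_pos : ∀ i ∈ suppw, 0 < up i := by
      intro i hi
      simp only [hup]
      by_cases h : 0 < w i
      · rw [if_pos h]
        exact div_pos (by linarith [hhi_lt i]) h
      · rw [if_neg h]
        have hneg : w i < 0 := lt_of_le_of_ne (not_lt.1 h) (hwmem i hi)
        exact div_pos_iff.2 (Or.inr ⟨by linarith [hlo_lt i (hsmem i hi)], hneg⟩)
    have hdn_neg : ∀ i ∈ suppw, dn i < 0 := by
      intro i hi
      simp only [hdn]
      by_cases h : 0 < w i
      · rw [if_pos h]
        exact div_neg_iff.2 (Or.inr ⟨by linarith [hlo_lt i (hsmem i hi)], h⟩)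
      · rw [if_neg h]
        have hneg : w i < 0 := lt_of_le_of_ne (not_lt.1 h) (hwmem i hi)
        exact div_neg_iff.2 (Or.inl ⟨by linarith [hhi_lt i], hneg⟩)
    set tp := (suppw.image up).min' (hsuppne.image up) with htp
    set tm := (suppw.image dn).max' (hsuppne.image dn) with htm
    have htp_pos : 0 < tp := by
      obtain ⟨i, hi, hie⟩ := Finset.mem_image.1 ((suppw.image up).min'_mem (hsuppne.image up))
      rw [htp, ← hie]
      exact hup_pos i hi
    have htm_neg : tm < 0 := by
      obtain ⟨i, hi, hie⟩ := Finset.mem_image.1 ((suppw.image dn).max'_mem (hsuppne.image dn))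
      rw [htm, ← hie]
      exact hdn_neg i hi
    set σ : Fin n → ℝ := fun i => if 0 ≤ c i then 1 else -1 with hσ
    set B := ∑ i, σ i * w i * ρ (x i) (y i) with hB
    set t := if 0 ≤ B then tm else tp with ht
    have htB : t * B ≤ 0 := by
      rw [ht]
      split_ifs with h
      · exact mul_nonpos_iff.2 (Or.inr ⟨htm_neg.le, h⟩)
      · exact mul_nonpos_iff.2 (Or.inl ⟨htp_pos.le, (not_le.1 h).le⟩)
    have htmem : tm ≤ t ∧ t ≤ tp := by
      rw [ht]
      split_ifs
      · exact ⟨le_refl _, (htm_neg.trans htp_pos).le⟩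
      · exact ⟨(htm_neg.trans htp_pos).le, le_refl _⟩
    have hbr : ∀ i ∈ suppw, lo i ≤ c i + t * w i ∧ c i + t * w i ≤ lo i + 1 := by
      intro i hi
      have h1 : dn i ≤ tm := Finset.le_max' _ _ (Finset.mem_image_of_mem dn hi)
      have h2 : tp ≤ up i := Finset.min'_le _ _ (Finset.mem_image_of_mem up hi)
      have hd : dn i ≤ t := le_trans h1 htmem.1
      have hu : t ≤ up i := le_trans htmem.2 h2
      simp only [hdn] at hd
      simp only [hup] at hu
      by_cases h : 0 < w i
      · rw [if_pos h] at hd hu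
        have h3 : lo i - c i ≤ t * w i := by
          have := (div_le_iff₀ h).1 hd
          linarith
        have h4 : t * w i ≤ lo i + 1 - c i := by
          have := (le_div_iff₀ h).1 hu
          linarith
        constructor <;> linarith
      · have hneg : w i < 0 := lt_of_le_of_ne (not_lt.1 h) (hwmem i hi)
        rw [if_neg h] at hd hu
        have h3 : t * w i ≤ lo i + 1 - c i := by
          have := (div_le_iff_of_neg hneg).1 hd
          linarith
        have h4 : lo i - c i ≤ t * w i := by
          have := (le_div_iff_of_neg hneg).1 hu
          linarith
        constructor <;> linarith
    have habs0 : ∀ i, |c i| = σ i * c i := by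
      intro i
      simp only [hσ]
      split_ifs with h
      · rw [abs_of_nonneg h, one_mul]
      · rw [abs_of_neg (not_le.1 h)]
        ring
    have habs : ∀ i, |c i + t * w i| = σ i * (c i + t * w i) := by
      intro i
      by_cases hi : i ∈ suppw
      · have hbri := hbr i hi
        have his : i ∈ s := hsmem i hi
        simp only [hσ]
        split_ifs with h
        · have h0 : (0:ℤ) ≤ ⌊c i⌋ := Int.floor_nonneg.2 h
          have h0' : (0:ℝ) ≤ lo i := by
            simp only [hlo]
            exact_mod_cast h0
          rw [abs_of_nonneg (by linarith [hbri.1]), one_mul]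
        · have hc : c i < 0 := not_le.1 h
          have h0 : ⌊c i⌋ < 0 := by
            by_contra hcon
            have : (0:ℝ) ≤ (⌊c i⌋ : ℝ) := by exact_mod_cast not_lt.1 hcon
            linarith [Int.floor_le (c i)]
          have h0' : lo i + 1 ≤ 0 := by
            simp only [hlo]
            have : ⌊c i⌋ + 1 ≤ 0 := by omega
            exact_mod_cast this
          rw [abs_of_nonpos (by linarith [hbri.2])]
          ring
      · have hw0 : w i = 0 := by
          by_contra hcon
          exact hi (Finset.mem_filter.2 ⟨Finset.mem_univ _, hcon⟩)
        rw [hw0, mul_zero, add_zero]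
        exact habs0 i
    set c' : Fin n → ℝ := fun i => c i + t * w i with hc'
    have hcost : ∑ i, |c' i| * ρ (x i) (y i) ≤ ∑ i, |c i| * ρ (x i) (y i) := by
      have heq : ∑ i, |c' i| * ρ (x i) (y i) = (∑ i, |c i| * ρ (x i) (y i)) + t * B := by
        rw [hB, Finset.mul_sum, ← Finset.sum_add_distrib]
        refine Finset.sum_congr rfl fun i _ => ?_
        simp only [hc']
        rw [habs i, habs0 i]
        ring
      linarith [htB]
    have hval' : ∑ i, c' i • (ee X pt (x i) - ee X pt (y i)) = inclAL X pt a := by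
      rw [← hval]
      calc ∑ i, c' i • (ee X pt (x i) - ee X pt (y i))
          = ∑ i, (c i • (ee X pt (x i) - ee X pt (y i))
              + t • (w i • (ee X pt (x i) - ee X pt (y i)))) := by
            refine Finset.sum_congr rfl fun i _ => ?_
            simp only [hc']
            rw [add_smul, smul_smul]
        _ = (∑ i, c i • (ee X pt (x i) - ee X pt (y i)))
              + t • ∑ i, w i • (ee X pt (x i) - ee X pt (y i)) := by
            rw [Finset.sum_add_distrib, Finset.smul_sum]
        _ = ∑ i, c i • (ee X pt (x i) - ee X pt (y i)) := by
            rw [hwsum, smul_zero, add_zero]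
    have hmono : ∀ i, (¬ ∃ m : ℤ, (m : ℝ) = c' i) → i ∈ s := by
      intro i h
      by_contra his
      have hw0 : w i = 0 := by
        rw [hw]
        exact dif_neg his
      apply h
      simp only [hc']
      rw [hw0, mul_zero, add_zero]
      exact hint i his
    have hhit : ∃ i0 ∈ suppw, ∃ m : ℤ, (m : ℝ) = c' i0 := by
      by_cases hBs : 0 ≤ B
      · have htt : t = tm := by rw [ht, if_pos hBs]
        obtain ⟨i0, hi0, hie⟩ := Finset.mem_image.1 ((suppw.image dn).max'_mem (hsuppne.image dn))
        refine ⟨i0, hi0, if 0 < w i0 then ⌊c i0⌋ else ⌊c i0⌋ + 1, ?_⟩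
        have hwne : w i0 ≠ 0 := hwmem i0 hi0
        simp only [hc']
        rw [htt, htm, ← hie]
        simp only [hdn]
        rw [div_mul_cancel₀ _ hwne]
        split_ifs <;> simp only [hlo] <;> push_cast <;> ring
      · have htt : t = tp := by rw [ht, if_neg hBs]
        obtain ⟨i0, hi0, hie⟩ := Finset.mem_image.1 ((suppw.image up).min'_mem (hsuppne.image up))
        refine ⟨i0, hi0, if 0 < w i0 then ⌊c i0⌋ + 1 else ⌊c i0⌋, ?_⟩
        have hwne : w i0 ≠ 0 := hwmem i0 hi0
        simp only [hc']
        rw [htt, htp, ← hie]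
        simp only [hup]
        rw [div_mul_cancel₀ _ hwne]
        split_ifs <;> simp only [hlo] <;> push_cast <;> ring
    obtain ⟨i0, hi0supp, hi0int⟩ := hhit
    have hi0s : i0 ∈ s := hsmem i0 hi0supp
    have hcard' : (Finset.univ.filter (fun i => ¬ ∃ m : ℤ, (m : ℝ) = c' i)).card ≤ k := by
      have hsub : Finset.univ.filter (fun i => ¬ ∃ m : ℤ, (m : ℝ) = c' i) ⊆ s :=
        fun i hi => hmono i (Finset.mem_filter.1 hi).2
      have hss : Finset.univ.filter (fun i => ¬ ∃ m : ℤ, (m : ℝ) = c' i) ⊂ s := by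
        refine (Finset.ssubset_iff_of_subset hsub).2 ⟨i0, hi0s, ?_⟩
        simp only [Finset.mem_filter, not_and, not_not]
        intro
        exact hi0int
      have := Finset.card_lt_card hss
      omega
    obtain ⟨m, x', y', d, hA, hC⟩ := ih n x y c' a hcard' hval'
    exact ⟨m, x', y', d, hA, le_trans hC hcost⟩

lemma chain (ρ : X → X → ℝ) (q : ({y : X // y ≠ pt} →₀ ℤ) → ({y : X // y ≠ pt} →₀ ℤ) → ℝ)
    (hq : IsInvariantPseudometric q)
    (hext : ∀ x y, q (jFreeA X pt x) (jFreeA X pt y) = ρ x y)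
    {m : ℕ} (x' y' : Fin m → X) (d : Fin m → ℤ) (a : {y : X // y ≠ pt} →₀ ℤ)
    (h : (∑ i, d i • (jFreeA X pt (x' i) - jFreeA X pt (y' i))) = a) :
    q a 0 ≤ ∑ i, (|d i| : ℝ) * ρ (x' i) (y' i) := by
  obtain ⟨hself, hsymm, htri, hinv⟩ := hq
  have hq0 : ∀ g, q (-g) 0 = q g 0 := by
    intro g
    calc q (-g) 0 = q (-g + g) (0 + g) := (hinv _ _ _).symm
      _ = q 0 g := by rw [neg_add_cancel, zero_add]
      _ = q g 0 := hsymm _ _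
  have hsub : ∀ g h : {y : X // y ≠ pt} →₀ ℤ, q (g + h) 0 ≤ q g 0 + q h 0 := by
    intro g h
    calc q (g + h) 0 ≤ q (g + h) h + q h 0 := htri _ _ _
      _ = q g 0 + q h 0 := by rw [show q (g + h) h = q g 0 by
          calc q (g + h) h = q (g + h) (0 + h) := by rw [zero_add]
            _ = q g 0 := hinv _ _ _]
  have hnsmul : ∀ (k : ℕ) (g : {y : X // y ≠ pt} →₀ ℤ), q ((k : ℤ) • g) 0 ≤ (k : ℝ) * q g 0 := by
    intro k
    induction k with
    | zero => intro g; simp [hself]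
    | succ k ih =>
      intro g
      have : ((k : ℤ) + 1) • g = g + (k : ℤ) • g := by
        rw [add_smul, one_smul, add_comm]
      push_cast
      rw [this]
      calc q (g + (k : ℤ) • g) 0 ≤ q g 0 + q ((k : ℤ) • g) 0 := hsub _ _
        _ ≤ q g 0 + (k : ℝ) * q g 0 := by linarith [ih g]
        _ = ((k : ℝ) + 1) * q g 0 := by ring
  have hzsmul : ∀ (m : ℤ) (g : {y : X // y ≠ pt} →₀ ℤ), q (m • g) 0 ≤ (|m| : ℝ) * q g 0 := by
    intro m g
    obtain ⟨k, rfl | rfl⟩ := m.eq_nat_or_neg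
    · simpa using hnsmul k g
    · rw [neg_smul, hq0]
      simpa using hnsmul k g
  have hsum : ∀ (t : Finset (Fin m)) (f : Fin m → ({y : X // y ≠ pt} →₀ ℤ)),
      q (∑ i ∈ t, f i) 0 ≤ ∑ i ∈ t, q (f i) 0 := by
    intro t f
    induction t using Finset.cons_induction with
    | empty => simp [hself]
    | cons i t hit ih =>
      rw [Finset.sum_cons, Finset.sum_cons]
      calc q (f i + ∑ j ∈ t, f j) 0 ≤ q (f i) 0 + q (∑ j ∈ t, f j) 0 := hsub _ _
        _ ≤ q (f i) 0 + ∑ j ∈ t, q (f j) 0 := by linarith [ih]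
  have hjj : ∀ x y : X, q (jFreeA X pt x - jFreeA X pt y) 0 = ρ x y := by
    intro x y
    calc q (jFreeA X pt x - jFreeA X pt y) 0
        = q (jFreeA X pt x - jFreeA X pt y + jFreeA X pt y) (0 + jFreeA X pt y) := (hinv _ _ _).symm
      _ = q (jFreeA X pt x) (jFreeA X pt y) := by rw [sub_add_cancel, zero_add]
      _ = ρ x y := hext x y
  calc q a 0 = q (∑ i, d i • (jFreeA X pt (x' i) - jFreeA X pt (y' i))) 0 := by rw [h]
    _ ≤ ∑ i, q (d i • (jFreeA X pt (x' i) - jFreeA X pt (y' i))) 0 := hsum _ _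
    _ ≤ ∑ i, (|d i| : ℝ) * ρ (x' i) (y' i) := by
        refine Finset.sum_le_sum fun i _ => ?_
        calc q (d i • (jFreeA X pt (x' i) - jFreeA X pt (y' i))) 0
            ≤ (|d i| : ℝ) * q (jFreeA X pt (x' i) - jFreeA X pt (y' i)) 0 := hzsmul _ _
          _ = (|d i| : ℝ) * ρ (x' i) (y' i) := by rw [hjj]


lemma phi_ee (f : X → ℝ) (x : X) :
    (Finsupp.linearCombination ℝ (fun z : {y : X // y ≠ pt} => f z.1 - f pt)) (ee X pt x)
      = f x - f pt := by
  by_cases h : x = pt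
  · rw [h, ee_pt, map_zero, sub_self]
  · rw [ee_of_ne X pt h, Finsupp.linearCombination_single, one_smul]

section FFlemmas

variable (ρ : X → X → ℝ) (hρ_self : ∀ a, ρ a a = 0) (hρ_comm : ∀ a b, ρ a b = ρ b a)
  (hρ_tri : ∀ a b c, ρ a c ≤ ρ a b + ρ b c)

include hρ_self hρ_comm hρ_tri

lemma repCosts_bddBelow (v : {y : X // y ≠ pt} →₀ ℝ) : BddBelow (repCosts X pt ρ v) :=
  ⟨0, fun r hr => repCosts_nonneg X pt ρ hρ_self hρ_comm hρ_tri v r hr⟩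

lemma FF_zero : FF X pt ρ 0 = 0 := by
  have h0 : (0 : ℝ) ∈ repCosts X pt ρ 0 :=
    ⟨0, fun _ => pt, fun _ => pt, fun _ => 0, by simp, by simp⟩
  refine le_antisymm (csInf_le (repCosts_bddBelow X pt ρ hρ_self hρ_comm hρ_tri 0) h0) ?_
  exact le_csInf (repCosts_nonempty X pt ρ 0)
    (repCosts_nonneg X pt ρ hρ_self hρ_comm hρ_tri 0)

lemma FF_subadd (u v : {y : X // y ≠ pt} →₀ ℝ) :
    FF X pt ρ (u + v) ≤ FF X pt ρ u + FF X pt ρ v := by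
  have hstep : ∀ r1 ∈ repCosts X pt ρ u, ∀ r2 ∈ repCosts X pt ρ v,
      FF X pt ρ (u + v) ≤ r1 + r2 := by
    rintro r1 ⟨n1, x1, y1, c1, hv1, hc1⟩ r2 ⟨n2, x2, y2, c2, hv2, hc2⟩
    have hmem : r1 + r2 ∈ repCosts X pt ρ (u + v) := by
      refine ⟨n1 + n2, Fin.append x1 x2, Fin.append y1 y2, Fin.append c1 c2, ?_, ?_⟩
      · rw [Fin.sum_univ_add]
        simp only [Fin.append_left, Fin.append_right]
        rw [hv1, hv2]
      · rw [Fin.sum_univ_add]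
        simp only [Fin.append_left, Fin.append_right]
        rw [hc1, hc2]
    exact csInf_le (repCosts_bddBelow X pt ρ hρ_self hρ_comm hρ_tri _) hmem
  have h1 : ∀ r1 ∈ repCosts X pt ρ u, FF X pt ρ (u + v) - r1 ≤ FF X pt ρ v := by
    intro r1 h
    exact le_csInf (repCosts_nonempty X pt ρ v) fun r2 h2 => by linarith [hstep r1 h r2 h2]
  have h2 : FF X pt ρ (u + v) - FF X pt ρ v ≤ FF X pt ρ u :=
    le_csInf (repCosts_nonempty X pt ρ u) fun r1 h => by linarith [h1 r1 h]
  linarith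

lemma FF_smul_le (r : ℝ) (u : {y : X // y ≠ pt} →₀ ℝ) :
    FF X pt ρ (r • u) ≤ |r| * FF X pt ρ u := by
  have hmm : ∀ t ∈ repCosts X pt ρ u, |r| * t ∈ repCosts X pt ρ (r • u) := by
    rintro t ⟨n, x, y, c, hv, hc⟩
    refine ⟨n, x, y, fun i => r * c i, ?_, ?_⟩
    · rw [← hv, Finset.smul_sum]
      refine Finset.sum_congr rfl fun i _ => ?_
      rw [mul_smul]
    · rw [← hc, Finset.mul_sum]
      refine Finset.sum_congr rfl fun i _ => ?_
      rw [abs_mul]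
      ring
  by_cases hr : r = 0
  · subst hr
    rw [zero_smul]
    simp only [abs_zero, zero_mul]
    rw [FF_zero X pt ρ hρ_self hρ_comm hρ_tri]
  · have habs : 0 < |r| := abs_pos.2 hr
    have h1 : FF X pt ρ (r • u) / |r| ≤ FF X pt ρ u := by
      refine le_csInf (repCosts_nonempty X pt ρ u) fun t ht => ?_
      have h2 := csInf_le (repCosts_bddBelow X pt ρ hρ_self hρ_comm hρ_tri (r • u)) (hmm t ht)
      rw [div_le_iff₀ habs, mul_comm]
      exact h2
    rw [div_le_iff₀ habs] at h1
    rw [mul_comm]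
    exact h1

lemma FF_smul (r : ℝ) (u : {y : X // y ≠ pt} →₀ ℝ) :
    FF X pt ρ (r • u) = |r| * FF X pt ρ u := by
  by_cases hr : r = 0
  · subst hr
    rw [zero_smul, FF_zero X pt ρ hρ_self hρ_comm hρ_tri]
    simp
  · refine le_antisymm (FF_smul_le X pt ρ hρ_self hρ_comm hρ_tri r u) ?_
    have h2 := FF_smul_le X pt ρ hρ_self hρ_comm hρ_tri r⁻¹ (r • u)
    rw [inv_smul_smul₀ hr] at h2
    have h3 : |r| * FF X pt ρ u ≤ |r| * (|r⁻¹| * FF X pt ρ (r • u)) :=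
      mul_le_mul_of_nonneg_left h2 (abs_nonneg r)
    rw [abs_inv, ← mul_assoc, mul_inv_cancel₀ (ne_of_gt (abs_pos.2 hr)), one_mul] at h3
    exact h3

lemma FF_ext (x y : X) : FF X pt ρ (ee X pt x - ee X pt y) = ρ x y := by
  refine le_antisymm ?_ ?_
  · refine csInf_le (repCosts_bddBelow X pt ρ hρ_self hρ_comm hρ_tri _) ?_
    exact ⟨1, fun _ => x, fun _ => y, fun _ => 1, by simp, by simp⟩
  · refine le_csInf (repCosts_nonempty X pt ρ _) ?_
    rintro t ⟨n, x', y', c, hv, rfl⟩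
    set f : X → ℝ := fun zz => ρ zz y with hf
    have hlip : ∀ a b, |f a - f b| ≤ ρ a b := by
      intro a b
      rw [abs_sub_le_iff]
      constructor
      · simp only [hf]
        linarith [hρ_tri a b y]
      · simp only [hf]
        have := hρ_tri b a y
        rw [hρ_comm b a] at this
        linarith
    have hb := cost_lower_bound X pt ρ f hlip x' y' c
    rw [hv] at hb
    have hval : (Finsupp.linearCombination ℝ (fun z : {y : X // y ≠ pt} => f z.1 - f pt))
        (ee X pt x - ee X pt y) = ρ x y := by
      rw [map_sub, phi_ee, phi_ee]
      simp only [hf]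
      rw [hρ_self]
      ring
    rw [hval] at hb
    exact le_trans (le_abs_self _) hb

end FFlemmas

/-- **Tkachenko–Uspenskij Theorem.**  Let `ρ` be a pseudometric on a pointed
set `(X, pt)`, let `ρ̄` be the Graev pseudometric on the free abelian group
`A(X, pt)` (the greatest translation-invariant pseudometric extending `ρ`),
and let `p_ρ` be the greatest seminorm on the free vector space `L(X, pt)`
with `p_ρ(x − y) = ρ(x, y)` for `x, y ∈ X`.  Then
`p_ρ(a − b) = ρ̄(a, b)` for all `a, b ∈ A(X, pt)`; in particular
`(A(X, pt), ρ̄)` sits isometrically inside `(L(X, pt), p_ρ)`. -/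
theorem tkachenko_uspenskij
    (ρ : X → X → ℝ)
    (hρ_self : ∀ a, ρ a a = 0) (hρ_comm : ∀ a b, ρ a b = ρ b a)
    (hρ_tri : ∀ a b c, ρ a c ≤ ρ a b + ρ b c)
    (ρbar : ({y : X // y ≠ pt} →₀ ℤ) → ({y : X // y ≠ pt} →₀ ℤ) → ℝ)
    (hρbar : IsGreatest
      {q | IsInvariantPseudometric q ∧
        ∀ x y : X, q (jFreeA X pt x) (jFreeA X pt y) = ρ x y}
      ρbar)
    (p : ({y : X // y ≠ pt} →₀ ℝ) → ℝ)
    (hp : IsGreatest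
      {q | IsSeminormOn q ∧
        ∀ x y : X, q (inclAL X pt (jFreeA X pt x) - inclAL X pt (jFreeA X pt y)) = ρ x y}
      p) :
    ∀ a b : ({y : X // y ≠ pt} →₀ ℤ),
      p (inclAL X pt a - inclAL X pt b) = ρbar a b := by
  intro a b
  obtain ⟨⟨hpsemi, hpext⟩, hpub⟩ := hp
  obtain ⟨⟨hρbarmem, hρbarext⟩, hρbarub⟩ := hρbar
  -- Direction 1 : p (a - b) ≤ ρbar a b
  have hp0 : p 0 = 0 := by
    have h := hpsemi.2 0 0
    rw [zero_smul, abs_zero, zero_mul] at h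
    exact h
  have hdir1 : p (inclAL X pt a - inclAL X pt b) ≤ ρbar a b := by
    have hqmem : (fun u v : ({y : X // y ≠ pt} →₀ ℤ) => p (inclAL X pt u - inclAL X pt v)) ∈
        {q | IsInvariantPseudometric q ∧ ∀ x y : X,
          q (jFreeA X pt x) (jFreeA X pt y) = ρ x y} := by
      refine ⟨⟨?_, ?_, ?_, ?_⟩, hpext⟩
      · intro u
        simp only [sub_self, hp0]
      · intro u v
        show p (inclAL X pt u - inclAL X pt v) = p (inclAL X pt v - inclAL X pt u)
        have h : inclAL X pt u - inclAL X pt v = (-1 : ℝ) • (inclAL X pt v - inclAL X pt u) := by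
          rw [neg_one_smul, neg_sub]
        rw [h, hpsemi.2]
        simp
      · intro u v w
        show p (inclAL X pt u - inclAL X pt w)
          ≤ p (inclAL X pt u - inclAL X pt v) + p (inclAL X pt v - inclAL X pt w)
        have h : inclAL X pt u - inclAL X pt w
            = (inclAL X pt u - inclAL X pt v) + (inclAL X pt v - inclAL X pt w) :=
          (sub_add_sub_cancel _ _ _).symm
        rw [h]
        exact hpsemi.1 _ _
      · intro u v w
        show p (inclAL X pt (u + w) - inclAL X pt (v + w)) = p (inclAL X pt u - inclAL X pt v)
        rw [map_add, map_add]
        have h : inclAL X pt u + inclAL X pt w - (inclAL X pt v + inclAL X pt w)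
            = inclAL X pt u - inclAL X pt v := by
          abel
        rw [h]
    exact hρbarub hqmem a b
  -- Direction 2 : ρbar a b ≤ FF (a - b) ≤ p (a - b)
  have hFmem : FF X pt ρ ∈ {q | IsSeminormOn q ∧ ∀ x y : X,
      q (inclAL X pt (jFreeA X pt x) - inclAL X pt (jFreeA X pt y)) = ρ x y} := by
    refine ⟨⟨FF_subadd X pt ρ hρ_self hρ_comm hρ_tri,
      FF_smul X pt ρ hρ_self hρ_comm hρ_tri⟩, ?_⟩
    intro x y
    exact FF_ext X pt ρ hρ_self hρ_comm hρ_tri x y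
  have hFle := hpub hFmem
  have h2 : ρbar a b ≤ FF X pt ρ (inclAL X pt a - inclAL X pt b) := by
    have hinclsub : inclAL X pt a - inclAL X pt b = inclAL X pt (a - b) := (map_sub _ _ _).symm
    rw [hinclsub]
    refine le_csInf (repCosts_nonempty X pt ρ _) ?_
    rintro t ⟨n, x, y, c, hv, rfl⟩
    obtain ⟨m, x', y', d, hA, hC⟩ := roundRep X pt ρ
      ((Finset.univ.filter (fun i => ¬ ∃ m : ℤ, (m : ℝ) = c i)).card) n x y c (a - b) le_rfl hv
    have hq := chain X pt ρ ρbar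
      ⟨hρbarmem.1, hρbarmem.2.1, hρbarmem.2.2.1, hρbarmem.2.2.2⟩ hρbarext x' y' d (a - b) hA
    have hshift : ρbar a b = ρbar (a - b) 0 := by
      have h := hρbarmem.2.2.2 (a - b) 0 b
      rw [sub_add_cancel, zero_add] at h
      exact h
    rw [hshift]
    exact le_trans hq hC
  exact le_antisymm hdir1 (le_trans h2 (hFle _))

end TkachenkoUspenskij
end

section
/- Let G be a Hausdorff topological group and i : A(G) → G the unique continuous homomorphism from the free abelian topological group on the underlying space of G restricting to the identity on G. Then i is an open (hence quotient) homomorphism of topological groups; consequently G is topologically isomorphic to A(G)/ker(i). -/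
/-- **Graev's theorem.**  Let `G` be a Hausdorff abelian topological group and
let `A` be the free abelian topological group on the underlying space of `G`
(in the sense of Graev), given by a topological embedding `σ : G → A` sending
the identity to zero, whose image generates `A` topologically... more
precisely, given by the Graev universal property: every continuous basepoint
preserving map from `G` into an abelian topological group extends uniquely to
a continuous homomorphism on `A`.  Then the unique continuous homomorphism
`i : A →+ G` with `i ∘ σ = id` is open (hence a quotient map), and `G` is
topologically isomorphic to `A ⧸ ker i`. -/
theorem graev_open_quotient
    (G : Type) [AddCommGroup G] [TopologicalSpace G] [IsTopologicalAddGroup G]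
    [T2Space G]
    (A : Type) [AddCommGroup A] [TopologicalSpace A] [IsTopologicalAddGroup A]
    (σ : G → A) (hσ : Topology.IsEmbedding σ) (hσ0 : σ 0 = 0)
    (huniv : ∀ (H : Type) [AddCommGroup H] [TopologicalSpace H]
      [IsTopologicalAddGroup H] (f : G → H), Continuous f → f 0 = 0 →
      ∃! φ : A →+ H, Continuous φ ∧ ∀ g : G, φ (σ g) = f g)
    (i : A →+ G) (hi_cont : Continuous i) (hi_id : ∀ g : G, i (σ g) = g) :
    IsOpenMap i ∧ Topology.IsQuotientMap i ∧
    ∃ e : (A ⧸ i.ker) ≃+ G, Continuous e ∧ Continuous e.symm := by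
  have hsurj : Function.Surjective i := fun g => ⟨σ g, hi_id g⟩
  -- i is open: it has, near each point, a continuous local section.
  have hopen : IsOpenMap i := by
    intro U hU
    rw [isOpen_iff_mem_nhds]
    rintro g ⟨a, haU, rfl⟩
    -- the map h : G → A, h x = a + σ x - σ (i a), is a continuous section through a
    set h : G → A := fun x => a + σ x - σ (i a) with hh
    have hcont : Continuous h :=
      (continuous_const.add hσ.continuous).sub continuous_const
    have hha : h (i a) = a := by simp [hh]
    have hsec : ∀ x, i (h x) = x := by
      intro x; simp [hh, hi_id]
    have hmem : h (i a) ∈ U := by rw [hha]; exact haU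
    have : h ⁻¹' U ∈ nhds (i a) :=
      hcont.continuousAt.preimage_mem_nhds (hU.mem_nhds hmem)
    refine Filter.mem_of_superset this ?_
    intro x hx
    exact ⟨h x, hx, hsec x⟩
  have hquot : Topology.IsQuotientMap i := hopen.isQuotientMap hi_cont hsurj
  refine ⟨hopen, hquot, ?_⟩
  let e := QuotientAddGroup.quotientKerEquivOfSurjective i hsurj
  have hmk : Continuous (QuotientAddGroup.mk : A → A ⧸ i.ker) := continuous_quot_mk
  have hcomp : ∀ a : A, e (QuotientAddGroup.mk a) = i a := fun a => rfl
  have hmkq : Topology.IsQuotientMap (QuotientAddGroup.mk : A → A ⧸ i.ker) :=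
    QuotientAddGroup.isOpenMap_coe.isQuotientMap hmk Quotient.mk''_surjective
  have he : Continuous e := by
    rw [hmkq.continuous_iff]
    exact hi_cont
  refine ⟨e, he, ?_⟩
  -- e.symm is continuous since e is an open map
  have heopen : IsOpenMap e := by
    intro U hU
    have : (e : A ⧸ i.ker → G) '' U = i '' (QuotientAddGroup.mk ⁻¹' U) := by
      ext g
      constructor
      · rintro ⟨q, hq, rfl⟩
        obtain ⟨a, rfl⟩ := Quotient.mk''_surjective q
        exact ⟨a, hq, rfl⟩
      · rintro ⟨a, ha, rfl⟩
        exact ⟨QuotientAddGroup.mk a, ha, rfl⟩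
    rw [this]
    exact hopen _ (hU.preimage hmk)
  refine continuous_def.mpr fun U hU => ?_
  have : e.symm ⁻¹' U = (e : A ⧸ i.ker → G) '' U := by
    ext g
    constructor
    · intro hg
      exact ⟨e.symm g, hg, e.apply_symm_apply g⟩
    · rintro ⟨q, hq, rfl⟩
      simpa using hq
  rw [this]
  exact heopen U hU
end
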